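/- arXiv:2309.09862 — 11 statements merged into one kernel-verified Lean document; each statement's English description precedes it below -/
import Mathlib

section
/- Let A be a complex Banach *-algebra with identity, and let a ∈ A be generalized Drazin invertible with g-Drazin inverse a^d. If x ∈ A satisfies x = a x², (ax)* = ax, and lim_{n→∞} ‖aⁿ - x a^{n+1}‖^{1/n} = 0 (i.e., x is a generalized core-EP inverse of a), then x a² a^d = a a^d, hence (xa - 1) a^d = 0. -/
open Filter Topology

variable {A : Type*} [NormedRing A] [StarRing A] [NormedAlgebra ℂ A] [StarModule ℂ A]
  [CompleteSpace A]

/-- quasinilpotent: `lim ‖z^n‖^(1/n) = 0` -/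
def IsQNil (z : A) : Prop :=
  Tendsto (fun n : ℕ => ‖z ^ n‖ ^ ((1 : ℝ) / n)) atTop (𝓝 0)

/-- generalized Drazin inverse -/
def IsGD (a x : A) : Prop :=
  a * x ^ 2 = x ∧ a * x = x * a ∧ IsQNil (a - a ^ 2 * x)

/-- generalized core-EP inverse -/
def IsGCEP (a x : A) : Prop :=
  x = a * x ^ 2 ∧ star (a * x) = a * x ∧
    Tendsto (fun n : ℕ => ‖a ^ n - x * a ^ (n + 1)‖ ^ ((1 : ℝ) / n)) atTop (𝓝 0)


/-
Since `a * ad ^ 2 = ad`, the element `c = a ad - x a² ad` factors as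
`c = (aⁿ - x aⁿ⁺¹) adⁿ` for every `n ≥ 1`. Hence `‖c‖ ≤ ‖aⁿ - x aⁿ⁺¹‖ ‖ad‖ⁿ`, and the
right-hand side tends to `0` by the root-test hypothesis on `x`, so `c = 0`.
Then `x a ad = x a² ad² = a ad² = ad`.
-/

theorem pow_succ_mul_pow_succ_of_mul_sq_eq {M : Type*} [Monoid M] {a d : M} (h : a * d ^ 2 = d)
    (n : ℕ) : a ^ (n + 1) * d ^ (n + 1) = a * d := by
  induction n with
  | zero => simp
  | succ n ih =>
    calc a ^ (n + 1 + 1) * d ^ (n + 1 + 1) = a * (a ^ (n + 1) * d ^ (n + 1)) * d := by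
          simp only [pow_succ' a (n + 1), pow_succ d (n + 1), mul_assoc]
      _ = a * d := by rw [ih, mul_assoc, mul_assoc, ← sq, h]

theorem mul_sub_mul_sq_mul_eq_of_mul_sq_eq {R : Type*} [Ring R] {a d : R} (h : a * d ^ 2 = d)
    (x : R) (n : ℕ) :
    a * d - x * a ^ 2 * d = (a ^ (n + 1) - x * a ^ (n + 1 + 1)) * d ^ (n + 1) := by
  calc a * d - x * a ^ 2 * d
    _ = a ^ (n + 1) * d ^ (n + 1) - x * (a * (a ^ (n + 1) * d ^ (n + 1))) := by
      rw [pow_succ_mul_pow_succ_of_mul_sq_eq h, sq, mul_assoc, mul_assoc]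
    _ = (a ^ (n + 1) - x * a ^ (n + 1 + 1)) * d ^ (n + 1) := by
      rw [pow_succ' a (n + 1)]; noncomm_ring

theorem tendsto_mul_pow_of_tendsto_rpow_one_div {u : ℕ → ℝ} (hu₀ : ∀ n, 0 ≤ u n)
    (hu : Tendsto (fun n : ℕ => u n ^ ((1 : ℝ) / n)) atTop (𝓝 0)) {r : ℝ} (hr : 0 ≤ r) :
    Tendsto (fun n => u n * r ^ n) atTop (𝓝 0) := by
  have hsmall : ∀ᶠ n : ℕ in atTop, u n ^ ((1 : ℝ) / n) * r ≤ 1 / 2 := by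
    simpa using (hu.mul_const r).eventually_le_const (by norm_num : (0 : ℝ) * r < 1 / 2)
  refine squeeze_zero' (.of_forall fun n => mul_nonneg (hu₀ n) (pow_nonneg hr n)) ?_
    (tendsto_pow_atTop_nhds_zero_of_lt_one (by norm_num : (0 : ℝ) ≤ 1 / 2) (by norm_num))
  filter_upwards [hsmall, eventually_ne_atTop 0] with n hn hn₀
  calc u n * r ^ n = (u n ^ ((1 : ℝ) / n) * r) ^ n := by
        rw [mul_pow, one_div, Real.rpow_inv_natCast_pow (hu₀ n) hn₀]
    _ ≤ (1 / 2) ^ n := pow_le_pow_left₀ (mul_nonneg (Real.rpow_nonneg (hu₀ n) _) hr) hn n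

theorem eq_zero_of_forall_eq_mul_pow {R : Type*} [NormedRing R] {c d : R} {b : ℕ → R}
    (hb : Tendsto (fun n : ℕ => ‖b n‖ ^ ((1 : ℝ) / n)) atTop (𝓝 0))
    (hc : ∀ n, c = b (n + 1) * d ^ (n + 1)) : c = 0 := by
  have hlim : Tendsto (fun n => ‖b (n + 1)‖ * ‖d‖ ^ (n + 1)) atTop (𝓝 0) :=
    (tendsto_add_atTop_iff_nat 1).2
      (tendsto_mul_pow_of_tendsto_rpow_one_div (fun _ => norm_nonneg _) hb (norm_nonneg d))
  refine norm_le_zero_iff.1 (ge_of_tendsto' hlim fun n => ?_)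
  calc ‖c‖ = ‖b (n + 1) * d ^ (n + 1)‖ := by rw [← hc n]
    _ ≤ ‖b (n + 1)‖ * ‖d‖ ^ (n + 1) := by
        grw [norm_mul_le, norm_pow_le' d n.succ_pos]

theorem stmt0 (a ad x : A) (had : IsGD a ad) (hx : IsGCEP a x) :
    x * a ^ 2 * ad = a * ad ∧ (x * a - 1) * ad = 0 := by
  obtain ⟨had, -, -⟩ := had
  obtain ⟨-, -, hx⟩ := hx
  have hx₂ : x * a ^ 2 * ad = a * ad :=
    (sub_eq_zero.1 (eq_zero_of_forall_eq_mul_pow hx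
      (mul_sub_mul_sq_mul_eq_of_mul_sq_eq had x))).symm
  have hsq : a ^ 2 * ad ^ 2 = a * ad := pow_succ_mul_pow_succ_of_mul_sq_eq had 1
  refine ⟨hx₂, ?_⟩
  calc (x * a - 1) * ad = x * (a ^ 2 * ad ^ 2) - ad := by rw [hsq]; noncomm_ring
    _ = 0 := by
        rw [sq ad, ← mul_assoc, ← mul_assoc, hx₂, mul_assoc, ← sq, had, sub_self]
end

section
/- Let A be a complex Banach *-algebra with identity and let a ∈ A be generalized Drazin invertible. Suppose x ∈ A satisfies x a x = x and the left annihilators satisfy ℓ(x) = ℓ(x*) = ℓ(a^d), where ℓ(z) = { y ∈ A : yz = 0 }. Then x is the (unique) generalized core-EP inverse of a, i.e., x = a x², (ax)* = ax, and lim_{n→∞} ‖aⁿ - x a^{n+1}‖^{1/n} = 0. -/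
open Filter Topology

variable {A : Type*} [NormedRing A] [StarRing A] [NormedAlgebra ℂ A] [StarModule ℂ A]
  [CompleteSpace A]

/-!
The annihilator conditions transfer one-sided unit relations between `x`, `x*` and `a^d`:
`(xa)x = x` gives `(xa)a^d = a^d`, whence `(ax)a^d = a^d`, and this in turn gives `(ax)x = x` and
`(ax)x* = x*`. The second makes `ax = (ax)(ax)*` self-adjoint. Since `1 - xa` kills `a^d`, it turns
`aⁿ` into `(a - a²a^d)ⁿ`, so `aⁿ - xaⁿ⁺¹ = (1 - xa)(a - a²a^d)ⁿ` inherits quasinilpotency.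
-/

theorem mul_eq_right_of_forall_mul_eq_zero_imp {R : Type*} [Ring R] {u v e : R}
    (h : ∀ y, y * u = 0 → y * v = 0) (he : e * u = u) : e * v = v := by
  have := h (e - 1) (by rw [sub_mul, one_mul, he, sub_self])
  rwa [sub_mul, one_mul, sub_eq_zero] at this

theorem star_mul_eq_of_mul_mul_star_eq {R : Type*} [Semigroup R] [StarMul R] {a x : R}
    (h : a * x * star x = star x) : star (a * x) = a * x := by
  have hx : x * star (a * x) = x := by
    simpa only [star_mul, star_star, mul_assoc] using congrArg star h
  have hp : a * x = a * x * star (a * x) := by rw [mul_assoc a, hx]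
  rw [hp, star_mul, star_star]

theorem mul_pow_sub_sq_mul_eq_mul_pow {R : Type*} [Ring R] {a b y : R} (hab : Commute a b)
    (hy : y * b = 0) (n : ℕ) : y * (a - a ^ 2 * b) ^ n = y * a ^ n := by
  induction n with
  | zero => rw [pow_zero, pow_zero]
  | succ n ih =>
    have hba : a ^ (n + 2) * b = b * a ^ (n + 2) := (hab.pow_left _).eq
    calc y * (a - a ^ 2 * b) ^ (n + 1) = y * a ^ n * (a - a ^ 2 * b) := by
          rw [pow_succ, ← mul_assoc, ih]
      _ = y * a ^ (n + 1) - y * (a ^ (n + 2) * b) := by rw [pow_add, pow_succ]; noncomm_ring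
      _ = y * a ^ (n + 1) := by rw [hba, ← mul_assoc, hy, zero_mul, sub_zero]

theorem Real.rpow_one_div_natCast_le_max_one {x : ℝ} (hx : 0 ≤ x) (n : ℕ) :
    x ^ ((1 : ℝ) / n) ≤ max 1 x := by
  rcases le_total x 1 with h | h
  · exact (Real.rpow_le_one hx h (by positivity)).trans (le_max_left _ _)
  · calc x ^ ((1 : ℝ) / n) ≤ x ^ (1 : ℝ) :=
          Real.rpow_le_rpow_of_exponent_le h (by rw [one_div]; exact Nat.cast_inv_le_one n)
      _ ≤ max 1 x := by rw [Real.rpow_one]; exact le_max_right _ _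

theorem tendsto_norm_mul_pow_rpow_one_div {R : Type*} [NormedRing R] (c q : R)
    (hq : Tendsto (fun n : ℕ => ‖q ^ n‖ ^ ((1 : ℝ) / n)) atTop (𝓝 0)) :
    Tendsto (fun n : ℕ => ‖c * q ^ n‖ ^ ((1 : ℝ) / n)) atTop (𝓝 0) := by
  have hbound (n : ℕ) :
      ‖c * q ^ n‖ ^ ((1 : ℝ) / n) ≤ max 1 ‖c‖ * ‖q ^ n‖ ^ ((1 : ℝ) / n) :=
    calc ‖c * q ^ n‖ ^ ((1 : ℝ) / n) ≤ (‖c‖ * ‖q ^ n‖) ^ ((1 : ℝ) / n) :=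
          Real.rpow_le_rpow (norm_nonneg _) (norm_mul_le _ _) (by positivity)
      _ = ‖c‖ ^ ((1 : ℝ) / n) * ‖q ^ n‖ ^ ((1 : ℝ) / n) :=
          Real.mul_rpow (norm_nonneg _) (norm_nonneg _)
      _ ≤ max 1 ‖c‖ * ‖q ^ n‖ ^ ((1 : ℝ) / n) := by
          gcongr; exact Real.rpow_one_div_natCast_le_max_one (norm_nonneg _) n
  exact squeeze_zero (fun n => by positivity) hbound (by simpa using hq.const_mul (max 1 ‖c‖))

theorem stmt1 (a ad x : A) (had : IsGD a ad) (h1 : x * a * x = x)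
    (h2 : ∀ y : A, y * x = 0 ↔ y * ad = 0)
    (h3 : ∀ y : A, y * star x = 0 ↔ y * ad = 0) :
    IsGCEP a x := by
  obtain ⟨had2, hcomm, hq⟩ := had
  have hxa : x * a * ad = ad := mul_eq_right_of_forall_mul_eq_zero_imp (fun y => (h2 y).1) h1
  have hax : a * x * ad = ad :=
    calc a * x * ad = a * (x * a * ad) * ad := by
          conv_lhs => rw [← had2]
          noncomm_ring
      _ = ad := by rw [hxa, mul_assoc, ← sq, had2]
  have hcore : a * x * x = x := mul_eq_right_of_forall_mul_eq_zero_imp (fun y => (h2 y).2) hax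
  have hstar : a * x * star x = star x :=
    mul_eq_right_of_forall_mul_eq_zero_imp (fun y => (h3 y).2) hax
  refine ⟨by rw [sq, ← mul_assoc, hcore], star_mul_eq_of_mul_mul_star_eq hstar, ?_⟩
  have hkill : (1 - x * a) * ad = 0 := by rw [sub_mul, one_mul, hxa, sub_self]
  have hform (n : ℕ) : a ^ n - x * a ^ (n + 1) = (1 - x * a) * (a - a ^ 2 * ad) ^ n := by
    rw [mul_pow_sub_sq_mul_eq_mul_pow hcomm hkill, sub_mul, one_mul, mul_assoc, ← pow_succ']
  simpa only [hform] using tendsto_norm_mul_pow_rpow_one_div (1 - x * a) _ hq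
end

section
/- Let A be a complex Banach *-algebra with identity and a ∈ A generalized Drazin invertible. Then a has a generalized core-EP inverse if and only if there exists a projection q ∈ A (q = q² = q*) with ℓ(a^d) = ℓ(q). In that case the generalized core-EP inverse equals a^d q. -/
open Filter Topology

variable {A : Type*} [NormedRing A] [StarRing A] [NormedAlgebra ℂ A] [StarModule ℂ A]
  [CompleteSpace A]

private lemma const_rpow_one_div_tendsto {C : ℝ} (hC : 0 < C) :
    Tendsto (fun n : ℕ => C ^ ((1:ℝ)/n)) atTop (𝓝 1) := by
  have h0 : Tendsto (fun n : ℕ => (1:ℝ)/n) atTop (𝓝 0) :=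
    tendsto_one_div_atTop_nhds_zero_nat
  have := (Real.continuousAt_const_rpow (b := (0:ℝ)) hC.ne').tendsto.comp h0
  simpa [Real.rpow_zero, Function.comp_def] using this

private lemma vanish (u : ℕ → ℝ) (hu : ∀ n, 0 ≤ u n)
    (h : Tendsto (fun n : ℕ => u n ^ ((1:ℝ)/n)) atTop (𝓝 0))
    (c C K : ℝ) (hc : 0 ≤ c) (hC : 0 < C) (hK : 0 ≤ K)
    (hb : ∀ n : ℕ, 1 ≤ n → c ≤ C * (u n * K ^ n)) : c = 0 := by
  by_contra hne
  have hcpos : 0 < c := lt_of_le_of_ne hc (Ne.symm hne)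
  have hle : ∀ᶠ n : ℕ in atTop,
      c ^ ((1:ℝ)/n) ≤ C ^ ((1:ℝ)/n) * (u n ^ ((1:ℝ)/n) * K) := by
    filter_upwards [eventually_ge_atTop 1] with n hn
    have hn0 : (n:ℝ) ≠ 0 := by exact_mod_cast Nat.one_le_iff_ne_zero.mp hn
    have he : (0:ℝ) ≤ (1:ℝ)/n := by positivity
    have h1 : c ^ ((1:ℝ)/n) ≤ (C * (u n * K ^ n)) ^ ((1:ℝ)/n) :=
      Real.rpow_le_rpow hc (hb n hn) he
    have h2 : (C * (u n * K ^ n)) ^ ((1:ℝ)/n)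
        = C ^ ((1:ℝ)/n) * (u n ^ ((1:ℝ)/n) * (K ^ n : ℝ) ^ ((1:ℝ)/n)) := by
      rw [Real.mul_rpow hC.le (mul_nonneg (hu n) (pow_nonneg hK n)),
        Real.mul_rpow (hu n) (pow_nonneg hK n)]
    have h3 : ((K ^ n : ℝ)) ^ ((1:ℝ)/n) = K := by
      rw [← Real.rpow_natCast K n, ← Real.rpow_mul hK]
      rw [mul_one_div, div_self hn0, Real.rpow_one]
    rw [h2, h3] at h1
    exact h1
  have hlim1 : Tendsto (fun n : ℕ => c ^ ((1:ℝ)/n)) atTop (𝓝 1) :=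
    const_rpow_one_div_tendsto hcpos
  have hlim2 : Tendsto (fun n : ℕ => C ^ ((1:ℝ)/n) * (u n ^ ((1:ℝ)/n) * K)) atTop (𝓝 0) := by
    have := (const_rpow_one_div_tendsto hC).mul (h.mul_const K)
    simpa using this
  have : (1:ℝ) ≤ 0 := le_of_tendsto_of_tendsto hlim1 hlim2 hle
  linarith

theorem stmt2 (a ad : A) (had : IsGD a ad) :
    (∃ x, IsGCEP a x) ↔
      ∃ q : A, q * q = q ∧ star q = q ∧ (∀ y : A, y * ad = 0 ↔ y * q = 0) ∧
        IsGCEP a (ad * q) := by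
  obtain ⟨h1, h2, h3⟩ := had
  constructor
  · rintro ⟨x, hx⟩
    obtain ⟨hx1, hx2, hx3⟩ := hx
    have comm : ad * a = a * ad := h2.symm
    have h1' : a * (ad * ad) = ad := by rw [← pow_two]; exact h1
    -- e = a * ad is idempotent
    have fe : (a * ad) * (a * ad) = a * ad := by
      rw [mul_assoc a ad, ← mul_assoc ad a, comm, mul_assoc a ad, h1']
    have fad_e : ad * (a * ad) = ad := by
      rw [← mul_assoc, comm, mul_assoc, h1']
    have hc : Commute a ad := h2
    -- a^n * ad^n = a*ad for n ≥ 1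
    have f4 : ∀ n : ℕ, 1 ≤ n → a ^ n * ad ^ n = a * ad := by
      intro n hn
      induction n with
      | zero => omega
      | succ m ih =>
        rcases Nat.eq_or_lt_of_le hn with h | h
        · simp [← h]
        · have hm : 1 ≤ m := by omega
          have hcm : a * ad ^ m = ad ^ m * a := (hc.pow_right m).eq
          calc a ^ (m+1) * ad ^ (m+1)
              = (a ^ m * a) * (ad ^ m * ad) := by rw [pow_succ, pow_succ]
            _ = a ^ m * (a * ad ^ m) * ad := by rw [mul_assoc (a ^ m), ← mul_assoc a,
                ← mul_assoc, ← mul_assoc]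
            _ = a ^ m * (ad ^ m * a) * ad := by rw [hcm]
            _ = (a ^ m * ad ^ m) * (a * ad) := by rw [← mul_assoc, mul_assoc _ a ad]
            _ = (a * ad) * (a * ad) := by rw [ih hm]
            _ = a * ad := fe
    -- x = a^n * x^(n+1)
    have f5 : ∀ n : ℕ, x = a ^ n * x ^ (n + 1) := by
      intro n
      induction n with
      | zero => simp
      | succ m ih =>
        calc x = a ^ m * x ^ (m + 1) := ih
          _ = a ^ m * (x * x ^ m) := by rw [pow_succ']
          _ = a ^ m * ((a * x ^ 2) * x ^ m) := by rw [← hx1]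
          _ = (a ^ m * a) * (x ^ 2 * x ^ m) := by
              rw [mul_assoc a (x ^ 2) (x ^ m), ← mul_assoc]
          _ = a ^ (m + 1) * x ^ (m + 1 + 1) := by
              rw [← pow_succ, ← pow_add]; ring_nf
    -- z := a - a^2 * ad ; ad * z = 0, hence (a*ad)*z = 0 etc.
    set z : A := a - a ^ 2 * ad with hz
    have adz0 : ad * z = 0 := by
      have e1 : ad * a ^ 2 = a ^ 2 * ad := (hc.symm.pow_right 2).eq
      have e2 : a ^ 2 * (ad * ad) = a * ad := by
        rw [pow_two, mul_assoc, h1']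
      rw [hz, mul_sub, comm, ← mul_assoc ad (a ^ 2) ad, e1, mul_assoc, e2, sub_self]
    have eaz0 : ((a * ad) * a) * z = 0 := by
      rw [mul_assoc a ad a, comm, ← mul_assoc, mul_assoc, mul_assoc, adz0]
      simp
    have hsplit : a = (a * ad) * a + z := by
      have : (a * ad) * a = a ^ 2 * ad := by
        rw [mul_assoc, comm, ← mul_assoc, ← pow_two]
      rw [this, hz]; abel
    -- a^n = (a*ad)*a^n + z^n for n ≥ 1
    have f6 : ∀ n : ℕ, 1 ≤ n → a ^ n = (a * ad) * a ^ n + z ^ n := by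
      intro n hn
      induction n with
      | zero => omega
      | succ m ih =>
        rcases Nat.eq_or_lt_of_le hn with h | h
        · simpa [← h] using hsplit
        · have hm : 1 ≤ m := by omega
          have haz : a * z ^ m = z ^ (m + 1) := by
            have : a * z ^ m = ((a * ad) * a) * z ^ m + z * z ^ m := by
              nth_rewrite 1 [hsplit]; rw [add_mul]
            rw [this, ← pow_succ']
            have : ((a * ad) * a) * z ^ m = 0 := by
              have : z ^ m = z * z ^ (m - 1) := by
                conv_lhs => rw [show m = 1 + (m-1) by omega]
                rw [pow_add, pow_one]
              rw [this, ← mul_assoc, eaz0, zero_mul]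
            rw [this, zero_add]
          calc a ^ (m + 1) = a * a ^ m := by rw [pow_succ']
            _ = a * ((a * ad) * a ^ m + z ^ m) := by rw [← ih hm]
            _ = a * ((a * ad) * a ^ m) + a * z ^ m := by rw [mul_add]
            _ = (a * (a * ad)) * a ^ m + z ^ (m + 1) := by rw [← mul_assoc, haz]
            _ = ((a * ad) * a) * a ^ m + z ^ (m + 1) := by
                have haa : a * (a * ad) = (a * ad) * a := by rw [mul_assoc a ad a, comm]
                rw [haa]
            _ = (a * ad) * a ^ (m + 1) + z ^ (m + 1) := by rw [mul_assoc, ← pow_succ']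
    -- (I) : x = (a*ad) * x
    have hI : x = (a * ad) * x := by
      have key : x - (a * ad) * x = 0 := by
        rw [← norm_eq_zero]
        set K : ℝ := max 1 ‖x‖ with hK
        have hK1 : (1:ℝ) ≤ K := le_max_left _ _
        have hKx : ‖x‖ ≤ K := le_max_right _ _
        refine vanish (fun n => ‖z ^ n‖) (fun n => norm_nonneg _) h3
          _ K K (norm_nonneg _) (by linarith) (by linarith) ?_
        intro n hn
        have hid : x - (a * ad) * x = z ^ n * x ^ (n + 1) := by
          have e1 : x = (a * ad) * x + z ^ n * x ^ (n + 1) := by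
            calc x = a ^ n * x ^ (n + 1) := f5 n
              _ = ((a * ad) * a ^ n + z ^ n) * x ^ (n + 1) := by rw [← f6 n hn]
              _ = (a * ad) * (a ^ n * x ^ (n + 1)) + z ^ n * x ^ (n + 1) := by
                  rw [add_mul, mul_assoc]
              _ = (a * ad) * x + z ^ n * x ^ (n + 1) := by rw [← f5 n]
          exact sub_eq_iff_eq_add'.mpr e1
        rw [hid]
        calc ‖z ^ n * x ^ (n + 1)‖ ≤ ‖z ^ n‖ * ‖x ^ (n + 1)‖ := norm_mul_le _ _
          _ ≤ ‖z ^ n‖ * ‖x‖ ^ (n + 1) :=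
              mul_le_mul_of_nonneg_left (norm_pow_le' x (by omega)) (norm_nonneg _)
          _ ≤ ‖z ^ n‖ * K ^ (n + 1) := by
              have : ‖x‖ ^ (n+1) ≤ K ^ (n+1) := pow_le_pow_left₀ (norm_nonneg _) hKx _
              exact mul_le_mul_of_nonneg_left this (norm_nonneg _)
          _ = K * (‖z ^ n‖ * K ^ n) := by ring
      exact sub_eq_zero.mp key
    -- (II) : x * (a^2 * ad) = a * ad
    have hII : x * (a ^ 2 * ad) = a * ad := by
      have key : a * ad - x * (a ^ 2 * ad) = 0 := by
        rw [← norm_eq_zero]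
        refine vanish (fun n => ‖a ^ n - x * a ^ (n + 1)‖) (fun n => norm_nonneg _) hx3
          _ 1 ‖ad‖ (norm_nonneg _) one_pos (norm_nonneg _) ?_
        intro n hn
        have hid : a * ad - x * (a ^ 2 * ad) = (a ^ n - x * a ^ (n + 1)) * ad ^ n := by
          have e1 : a ^ (n + 1) * ad ^ n = a ^ 2 * ad := by
            calc a ^ (n + 1) * ad ^ n = a * (a ^ n * ad ^ n) := by
                  rw [pow_succ', mul_assoc]
              _ = a * (a * ad) := by rw [f4 n hn]
              _ = a ^ 2 * ad := by rw [← mul_assoc, ← pow_two]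
          rw [sub_mul, f4 n hn, mul_assoc, e1]
        rw [hid, one_mul]
        calc ‖(a ^ n - x * a ^ (n + 1)) * ad ^ n‖
            ≤ ‖a ^ n - x * a ^ (n + 1)‖ * ‖ad ^ n‖ := norm_mul_le _ _
          _ ≤ ‖a ^ n - x * a ^ (n + 1)‖ * ‖ad‖ ^ n :=
              mul_le_mul_of_nonneg_left (norm_pow_le' ad (by omega)) (norm_nonneg _)
      have := sub_eq_zero.mp key
      exact this.symm
    -- assemble
    have hax : a * x = (a ^ 2 * ad) * x := by
      nth_rewrite 1 [hI]
      rw [← mul_assoc, ← mul_assoc, ← pow_two]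
    refine ⟨a * x, ?_, hx2, ?_, ?_⟩
    · -- idempotent
      calc (a * x) * (a * x) = (a * x) * ((a ^ 2 * ad) * x) := by rw [← hax]
        _ = (a * (x * (a ^ 2 * ad))) * x := by
            rw [← mul_assoc, mul_assoc a x (a ^ 2 * ad)]
        _ = (a * (a * ad)) * x := by rw [hII]
        _ = (a ^ 2 * ad) * x := by rw [← mul_assoc, ← pow_two]
        _ = a * x := hax.symm
    · -- left annihilators
      intro y
      constructor
      · intro hy
        have e1 : a ^ 2 * ad = ad * a ^ 2 := ((hc.symm.pow_right 2).eq).symm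
        rw [hax, e1, ← mul_assoc, ← mul_assoc, hy, zero_mul, zero_mul]
      · intro hy
        have e1 : ad = (a * x) * (x * (a * ad)) := by
          have e2 : (x * (a ^ 2 * ad)) * ad = x * (a * ad) := by
            rw [mul_assoc, mul_assoc, pow_two, mul_assoc, h1']
          have e3 : ad = (x * (a ^ 2 * ad)) * ad := by rw [hII, mul_assoc, h1']
          rw [e2] at e3
          have e4 : x = (a * x) * x := by
            nth_rewrite 1 [hx1]; rw [pow_two, mul_assoc]
          nth_rewrite 1 [e3]
          nth_rewrite 1 [e4]
          rw [mul_assoc]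
        rw [e1, ← mul_assoc, hy, zero_mul]
    · -- IsGCEP a (ad * (a * x))
      have e1 : ad * (a * x) = x := by
        rw [← mul_assoc, comm, ← hI]
      rw [e1]
      exact ⟨hx1, hx2, hx3⟩
  · rintro ⟨q, _, _, _, hq⟩
    exact ⟨ad * q, hq⟩
end

section
/- Let A be a complex Banach *-algebra with identity, let a ∈ A have a generalized core-EP inverse a^⊕, and let x ∈ A, λ, μ ∈ ℂ \ {0} satisfy a x = λ x a and a* x = μ x a*. Then a^⊕ x = λ^{-1} x a^⊕. -/
open Filter Topology

variable {A : Type*} [NormedRing A] [StarRing A] [NormedAlgebra ℂ A] [StarModule ℂ A]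
  [CompleteSpace A]

/-!
Write `g = a^⊕`. Iterating `g = a g²` gives `g = aⁿ gⁿ⁺¹`, so if `y a = d a y` then
`y g - g a y g = dⁿ (aⁿ - g aⁿ⁺¹) y gⁿ⁺¹`. The right side has norm at most
`(‖d‖ ‖g‖)ⁿ ‖aⁿ - g aⁿ⁺¹‖ ‖y‖ ‖g‖`, which tends to `0` since the middle factor decays faster than
any geometric sequence; hence `y g = g a y g`. Applied to `y = 1`, `y = x` and `y = x*`, and combined
with the self-adjointness of the idempotent `a g`, this yields `x g = λ g x`.
-/

theorem tendsto_pow_mul_of_tendsto_rpow_one_div {w : ℕ → ℝ} (hw0 : ∀ n, 0 ≤ w n)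
    (hw : Tendsto (fun n : ℕ => w n ^ ((1 : ℝ) / n)) atTop (𝓝 0)) {C : ℝ} (hC : 0 ≤ C) :
    Tendsto (fun n => C ^ n * w n) atTop (𝓝 0) := by
  have hhalf : ∀ᶠ n : ℕ in atTop, C * w n ^ ((1 : ℝ) / n) ≤ 1 / 2 := by
    have := hw.const_mul C
    rw [mul_zero] at this
    exact this.eventually_le_const (by norm_num)
  refine squeeze_zero' (.of_forall fun n => mul_nonneg (pow_nonneg hC n) (hw0 n)) ?_
    (tendsto_pow_atTop_nhds_zero_of_lt_one (by norm_num : (0 : ℝ) ≤ 1 / 2) (by norm_num))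
  filter_upwards [hhalf, eventually_ne_atTop 0] with n hn hn0
  calc C ^ n * w n = (C * w n ^ ((1 : ℝ) / n)) ^ n := by
        rw [mul_pow, one_div, Real.rpow_inv_natCast_pow (hw0 n) hn0]
    _ ≤ (1 / 2) ^ n := pow_le_pow_left₀ (mul_nonneg hC (Real.rpow_nonneg (hw0 n) _)) hn n

theorem pow_mul_pow_succ_eq_of_eq_mul_sq {M : Type*} [Monoid M] {a g : M} (hg : g = a * g ^ 2)
    (n : ℕ) : a ^ n * g ^ (n + 1) = g := by
  induction n with
  | zero => simp
  | succ n ih =>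
    rw [pow_succ a n, show n + 1 + 1 = 2 + n by omega, pow_add, mul_assoc, ← mul_assoc a,
      ← hg, ← pow_succ', ih]

theorem mul_pow_eq_smul_pow_mul {K R : Type*} [CommSemiring K] [Semiring R] [Algebra K R]
    {a y : R} {d : K} (h : y * a = d • (a * y)) (n : ℕ) : y * a ^ n = d ^ n • (a ^ n * y) := by
  induction n with
  | zero => simp
  | succ n ih =>
    rw [pow_succ, ← mul_assoc, ih, smul_mul_assoc, mul_assoc, h, mul_smul_comm, smul_smul,
      ← mul_assoc, ← pow_succ, ← pow_succ]

section GeneralizedCoreEP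

variable {𝕜 R : Type*} [NormedField 𝕜] [NormedRing R] [NormedAlgebra 𝕜 R] {a g : R}

theorem sub_mul_mul_eq_smul_of_mul_eq_smul (hg : g = a * g ^ 2) {y : R} {d : 𝕜}
    (h : y * a = d • (a * y)) (n : ℕ) :
    y * g - g * (a * (y * g)) = d ^ n • ((a ^ n - g * a ^ (n + 1)) * (y * g ^ (n + 1))) := by
  have hyg : y * g = d ^ n • (a ^ n * (y * g ^ (n + 1))) := by
    conv_lhs => rw [← pow_mul_pow_succ_eq_of_eq_mul_sq hg n]
    rw [← mul_assoc, mul_pow_eq_smul_pow_mul h n, smul_mul_assoc, mul_assoc]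
  rw [hyg, mul_smul_comm, mul_smul_comm, ← smul_sub, sub_mul, pow_succ' a n]
  simp only [mul_assoc]

theorem mul_eq_mul_mul_mul_of_mul_eq_smul (hg : g = a * g ^ 2)
    (hlim : Tendsto (fun n : ℕ => ‖a ^ n - g * a ^ (n + 1)‖ ^ ((1 : ℝ) / n)) atTop (𝓝 0))
    {y : R} {d : 𝕜} (h : y * a = d • (a * y)) : y * g = g * (a * (y * g)) := by
  have hbound : ∀ n : ℕ, ‖y * g - g * (a * (y * g))‖ ≤
      (‖d‖ * ‖g‖) ^ n * ‖a ^ n - g * a ^ (n + 1)‖ * (‖y‖ * ‖g‖) := fun n => by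
    rw [sub_mul_mul_eq_smul_of_mul_eq_smul hg h n, norm_smul, norm_pow]
    calc ‖d‖ ^ n * ‖(a ^ n - g * a ^ (n + 1)) * (y * g ^ (n + 1))‖
        ≤ ‖d‖ ^ n * (‖a ^ n - g * a ^ (n + 1)‖ * (‖y‖ * ‖g‖ ^ (n + 1))) := by
          gcongr
          refine (norm_mul_le _ _).trans (mul_le_mul_of_nonneg_left ?_ (norm_nonneg _))
          exact (norm_mul_le _ _).trans
            (mul_le_mul_of_nonneg_left (norm_pow_le' _ n.succ_pos) (norm_nonneg _))
      _ = (‖d‖ * ‖g‖) ^ n * ‖a ^ n - g * a ^ (n + 1)‖ * (‖y‖ * ‖g‖) := by ring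
  have hlim' := (tendsto_pow_mul_of_tendsto_rpow_one_div (fun _ => norm_nonneg _) hlim
    (mul_nonneg (norm_nonneg d) (norm_nonneg g))).mul_const (‖y‖ * ‖g‖)
  rw [zero_mul] at hlim'
  exact sub_eq_zero.mp (norm_le_zero_iff.mp (ge_of_tendsto' hlim' hbound))

theorem mul_mul_mul_eq_mul_of_star_mul_eq_smul [StarRing R] (hg : g = a * g ^ 2)
    (hlim : Tendsto (fun n : ℕ => ‖a ^ n - g * a ^ (n + 1)‖ ^ ((1 : ℝ) / n)) atTop (𝓝 0))
    (hp : star (a * g) = a * g) {y : R} {d : 𝕜} (h : star y * a = d • (a * star y)) :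
    g * (y * (a * g)) = g * y := by
  have hgag : g * (a * g) = g := by
    simpa using (mul_eq_mul_mul_mul_of_mul_eq_smul hg hlim (y := 1) (d := (1 : 𝕜)) (by simp)).symm
  have hyg := mul_eq_mul_mul_mul_of_mul_eq_smul hg hlim h
  have hya : star y * (a * g) = d • (a * (star y * g)) := by
    rw [← mul_assoc, h, smul_mul_assoc, mul_assoc]
  have hyp : star y * (a * g) = a * g * (star y * (a * g)) :=
    calc star y * (a * g) = d • (a * (g * (a * (star y * g)))) := by rw [hya, ← hyg]
      _ = a * g * (star y * (a * g)) := by rw [hya, mul_smul_comm, mul_assoc]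
  have hpy : a * g * y * (a * g) = a * g * y := by
    have := congrArg star hyp
    rwa [star_mul (a * g), star_mul (star y), star_star, hp, eq_comm] at this
  calc g * (y * (a * g)) = g * (a * g) * y * (a * g) := by rw [hgag]; simp only [mul_assoc]
    _ = g * (a * g * y * (a * g)) := by simp only [mul_assoc]
    _ = g * y := by rw [hpy, ← mul_assoc, hgag]

end GeneralizedCoreEP

theorem stmt4_general (a x ag : A) (l m : ℂ) (hl : l ≠ 0)
    (hg : IsGCEP a ag)
    (h1 : a * x = l • (x * a)) (h2 : star a * x = m • (x * star a)) :
    ag * x = l⁻¹ • (x * ag) := by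
  obtain ⟨hg, hp, hlim⟩ := hg
  have hxa : x * a = l⁻¹ • (a * x) := by rw [h1, smul_smul, inv_mul_cancel₀ hl, one_smul]
  have hxsa : star x * a = star m • (a * star x) := by
    simpa only [star_mul, star_smul, star_star] using congrArg star h2
  have hxg : x * ag = l • (ag * x) :=
    calc x * ag = ag * (a * (x * ag)) := mul_eq_mul_mul_mul_of_mul_eq_smul hg hlim hxa
      _ = l • (ag * (x * (a * ag))) := by
        rw [← mul_assoc a, h1, smul_mul_assoc, mul_smul_comm, mul_assoc x]
      _ = l • (ag * x) := by rw [mul_mul_mul_eq_mul_of_star_mul_eq_smul hg hlim hp hxsa]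
  rw [hxg, smul_smul, inv_mul_cancel₀ hl, one_smul]

theorem stmt4 (a x ag : A) (l m : ℂ) (hl : l ≠ 0) (hm : m ≠ 0)
    (hg : IsGCEP a ag)
    (h1 : a * x = l • (x * a)) (h2 : star a * x = m • (x * star a)) :
    ag * x = l⁻¹ • (x * ag) :=
  stmt4_general a x ag l m hl hg h1 h2
end

section
/- Let A be a complex Banach *-algebra with identity and let a, b ∈ A both have generalized core-EP inverses a^⊕, b^⊕. Suppose λ, μ ∈ ℂ \ {0} with a b = λ b a and a* b = μ b a*. Then a b has a generalized core-EP inverse and (ab)^⊕ = b^⊕ a^⊕ = λ^{-1} a^⊕ b^⊕. -/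
open Filter Topology

variable {A : Type*} [NormedRing A] [StarRing A] [NormedAlgebra ℂ A] [StarModule ℂ A]
  [CompleteSpace A]

/-!
Let `x` be the generalized core-EP inverse of `b` and `p = b x`. If `d b = σ b d`, then
`d p - p d p = σⁿ⁺¹ b (bⁿ - x bⁿ⁺¹) d xⁿ⁺¹` for every `n`, and the super-geometric decay of
`bⁿ - x bⁿ⁺¹` forces `d p = p d p`. Applied to `c` and `c*`, with `p* = p`, this gives `c p = p c`,
and then `x c = ν c x` whenever `c b = ν b c`. This yields every commutation relation between
`a`, `b`, `a^⊕`, `b^⊕` and the projections `a a^⊕`, `b b^⊕`. Then `(ab)(b^⊕a^⊕) = (bb^⊕)(aa^⊕)` is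
a product of commuting self-adjoint idempotents, and the decay condition for `ab` amounts to
quasinilpotency of `ab - (b^⊕a^⊕)(ab)² = a(b - b^⊕b²) + (a - a^⊕a²)(b^⊕b²)`: a sum of two
quasinilpotents with vanishing product, each a twisted product with a quasinilpotent factor.
-/

theorem tendsto_zero_of_tendsto_rpow_one_div {f : ℕ → ℝ} (hf : ∀ n, 0 ≤ f n)
    (h : Tendsto (fun n : ℕ => f n ^ ((1 : ℝ) / n)) atTop (𝓝 0)) :
    Tendsto f atTop (𝓝 0) := by
  refine squeeze_zero' (.of_forall hf) ?_
    (tendsto_pow_atTop_nhds_zero_of_lt_one (by norm_num : (0 : ℝ) ≤ 1 / 2) (by norm_num))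
  filter_upwards [h.eventually_lt_const (by norm_num : (0 : ℝ) < 1 / 2),
    eventually_ne_atTop 0] with n hroot hn
  calc f n = (f n ^ ((1 : ℝ) / n)) ^ n := by rw [one_div, Real.rpow_inv_natCast_pow (hf n) hn]
    _ ≤ (1 / 2) ^ n := pow_le_pow_left₀ (Real.rpow_nonneg (hf n) _) hroot.le n

theorem tendsto_pow_mul_rpow_one_div {f : ℕ → ℝ} (hf : ∀ n, 0 ≤ f n) {D : ℝ} (hD : 0 ≤ D)
    (h : Tendsto (fun n : ℕ => f n ^ ((1 : ℝ) / n)) atTop (𝓝 0)) :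
    Tendsto (fun n : ℕ => (D ^ n * f n) ^ ((1 : ℝ) / n)) atTop (𝓝 0) := by
  have hscaled : Tendsto (fun n : ℕ => D * f n ^ ((1 : ℝ) / n)) atTop (𝓝 0) := by
    simpa using h.const_mul D
  refine hscaled.congr' ?_
  filter_upwards [eventually_ne_atTop 0] with n hn
  rw [Real.mul_rpow (pow_nonneg hD n) (hf n), one_div, Real.pow_rpow_inv_natCast hD hn]

theorem eq_zero_of_norm_le_mul_pow {E F : Type*} [NormedAddCommGroup E] [SeminormedAddCommGroup F]
    {w : E} {z : ℕ → F} (hz : Tendsto (fun n : ℕ => ‖z n‖ ^ ((1 : ℝ) / n)) atTop (𝓝 0))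
    {C D : ℝ} (hD : 0 ≤ D) (h : ∀ n, ‖w‖ ≤ C * (D ^ n * ‖z n‖)) : w = 0 := by
  have hlim : Tendsto (fun n => C * (D ^ n * ‖z n‖)) atTop (𝓝 0) := by
    simpa using (tendsto_zero_of_tendsto_rpow_one_div
      (fun n => mul_nonneg (pow_nonneg hD n) (norm_nonneg _))
      (tendsto_pow_mul_rpow_one_div (fun n => norm_nonneg (z n)) hD hz)).const_mul C
  exact norm_le_zero_iff.1 (ge_of_tendsto' hlim h)

section Ring

variable {R : Type*}

theorem pow_succ_mul_pow_succ_of_eq_mul_sq [Monoid R] {b x : R} (hx : x = b * x ^ 2) (n : ℕ) :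
    b ^ (n + 1) * x ^ (n + 1) = b * x := by
  induction n with
  | zero => simp
  | succ n ih =>
    calc b ^ (n + 2) * x ^ (n + 2) = b ^ (n + 1) * (b * x ^ 2) * x ^ n := by
          rw [pow_succ b (n + 1), add_comm n 2, pow_add x 2 n]; simp only [mul_assoc]
      _ = b * x := by rw [← hx, mul_assoc, ← pow_succ', ih]

theorem sub_mul_sq_pow_succ [Ring R] {b x : R} (h : (b - x * b ^ 2) * (x * b) = 0) (n : ℕ) :
    (b - x * b ^ 2) ^ (n + 1) = b ^ (n + 1) - x * b ^ (n + 2) := by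
  induction n with
  | zero => simp
  | succ n ih =>
    calc (b - x * b ^ 2) ^ (n + 2) = (b - x * b ^ 2) * b ^ (n + 1)
          - (b - x * b ^ 2) * (x * b) * b ^ (n + 1) := by
          rw [pow_succ', ih, mul_sub, pow_succ' b (n + 1), ← mul_assoc x, mul_assoc _ (x * b)]
      _ = b ^ (n + 2) - x * b ^ (n + 3) := by
          rw [h, zero_mul, sub_zero, sub_mul, ← pow_succ', mul_assoc, ← pow_add, add_comm 2]

end Ring

def QCommute {K R : Type*} [SMul K R] [Mul R] (q : K) (u v : R) : Prop :=
  u * v = q • (v * u)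

namespace QCommute

variable {K R : Type*} [Field K] [Ring R] [Algebra K R] {q r : K} {u v w : R}

theorem _root_.Commute.qCommute (h : Commute u v) : QCommute (1 : K) u v := by
  rw [QCommute, one_smul]; exact h

theorem commute (h : QCommute (1 : K) u v) : Commute u v := by
  rwa [QCommute, one_smul] at h

theorem symm (hq : q ≠ 0) (h : QCommute q u v) : QCommute q⁻¹ v u := by
  rw [QCommute, h, smul_smul, inv_mul_cancel₀ hq, one_smul]

theorem mul_right (h : QCommute q u v) (h' : QCommute r u w) : QCommute (q * r) u (v * w) := by
  rw [QCommute, ← mul_assoc, h, smul_mul_assoc, mul_assoc, h', mul_smul_comm, smul_smul,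
    ← mul_assoc]

theorem mul_left (h : QCommute q u w) (h' : QCommute r v w) : QCommute (q * r) (u * v) w := by
  rw [QCommute, mul_assoc, h', mul_smul_comm, ← mul_assoc, h, smul_mul_assoc, smul_smul,
    mul_assoc, mul_comm q]

theorem commute_mul_left (hq : q ≠ 0) (h : QCommute q⁻¹ u w) (h' : QCommute q v w) :
    Commute (u * v) w := by
  have huvw := h.mul_left h'
  rwa [QCommute, inv_mul_cancel₀ hq, one_smul] at huvw

theorem pow_right (h : QCommute q u v) (n : ℕ) : QCommute (q ^ n) u (v ^ n) := by
  induction n with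
  | zero => simp [QCommute]
  | succ n ih => rw [pow_succ, pow_succ]; exact ih.mul_right h

theorem pow_left (h : QCommute q u v) (n : ℕ) : QCommute (q ^ n) (u ^ n) v := by
  induction n with
  | zero => simp [QCommute]
  | succ n ih => rw [pow_succ, pow_succ]; exact ih.mul_left h

theorem sub_right (h : QCommute q u v) (h' : QCommute q u w) : QCommute q u (v - w) := by
  rw [QCommute, mul_sub, h, h', sub_mul, smul_sub]

theorem sub_left (h : QCommute q u w) (h' : QCommute q v w) : QCommute q (u - v) w := by
  rw [QCommute, sub_mul, h, h', mul_sub, smul_sub]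

theorem star [StarRing K] [StarRing R] [StarModule K R] (h : QCommute q u v) :
    QCommute (star q) (star v) (star u) := by
  rw [QCommute, ← star_mul, h, star_smul, star_mul]

theorem mul_pow (h : QCommute q u v) (n : ℕ) :
    (v * u) ^ n = q ^ n.choose 2 • (v ^ n * u ^ n) := by
  induction n with
  | zero => simp
  | succ n ih =>
    calc (v * u) ^ (n + 1) = q ^ n.choose 2 • (v ^ n * (u ^ n * v) * u) := by
          rw [pow_succ, ih, smul_mul_assoc]; simp only [mul_assoc]
      _ = q ^ (n + 1).choose 2 • (v ^ (n + 1) * u ^ (n + 1)) := by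
          rw [h.pow_left n, mul_smul_comm, smul_mul_assoc, smul_smul, ← pow_add,
            Nat.choose_succ_succ' n 1, Nat.choose_one_right, add_comm n]
          simp only [pow_succ, mul_assoc]

end QCommute

section QNil

variable {R : Type*} [NormedRing R]

theorem IsQNil.of_norm_pow_le {s z : R} (hs : IsQNil s) {D : ℝ} (hD : 0 ≤ D)
    (h : ∀ᶠ n in atTop, ‖z ^ n‖ ≤ D ^ n * ‖s ^ n‖) : IsQNil z := by
  refine squeeze_zero' (.of_forall fun n => Real.rpow_nonneg (norm_nonneg _) _) ?_
    (tendsto_pow_mul_rpow_one_div (fun n => norm_nonneg _) hD hs)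
  filter_upwards [h] with n hn
  exact Real.rpow_le_rpow (norm_nonneg _) hn (by positivity)

theorem isQNil_sub_mul_sq_iff {b x : R} (h : x * b ^ 2 * x = b * x) :
    IsQNil (b - x * b ^ 2) ↔
      Tendsto (fun n : ℕ => ‖b ^ n - x * b ^ (n + 1)‖ ^ ((1 : ℝ) / n)) atTop (𝓝 0) := by
  have hker : (b - x * b ^ 2) * (x * b) = 0 := by
    rw [sub_mul, ← mul_assoc, ← h, sq]; simp only [mul_assoc, sub_self]
  refine tendsto_congr' ?_
  filter_upwards [eventually_ne_atTop 0] with n hn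
  obtain ⟨k, rfl⟩ := Nat.exists_eq_succ_of_ne_zero hn
  rw [sub_mul_sq_pow_succ hker]

variable [NormedAlgebra ℂ R] [CompleteSpace R]

theorem isQNil_iff_spectralRadius_eq_zero (z : R) : IsQNil z ↔ spectralRadius ℂ z = 0 := by
  have hG := spectrum.pow_norm_pow_one_div_tendsto_nhds_spectralRadius z
  constructor
  · intro h
    exact tendsto_nhds_unique hG (by simpa using ENNReal.tendsto_ofReal h)
  · intro h
    rw [h] at hG
    refine ((ENNReal.tendsto_toReal ENNReal.zero_ne_top).comp hG).congr fun n => ?_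
    exact ENNReal.toReal_ofReal (Real.rpow_nonneg (norm_nonneg _) _)

theorem isQNil_iff_spectrum_subset (z : R) : IsQNil z ↔ spectrum ℂ z ⊆ {0} := by
  rw [isQNil_iff_spectralRadius_eq_zero, spectralRadius, ← bot_eq_zero, iSup₂_eq_bot]
  simp [Set.subset_def]

theorem IsQNil.mul_comm {s t : R} (h : IsQNil (s * t)) : IsQNil (t * s) := by
  rw [isQNil_iff_spectrum_subset, ← Set.sdiff_eq_empty, ← spectrum.nonzero_mul_comm,
    Set.sdiff_eq_empty, ← isQNil_iff_spectrum_subset]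
  exact h

theorem IsQNil.add_of_mul_eq_zero {u v : R} (huv : u * v = 0) (hu : IsQNil u) (hv : IsQNil v) :
    IsQNil (u + v) := by
  rw [isQNil_iff_spectrum_subset] at hu hv ⊢
  intro k hk
  by_contra hk0
  have hunit : IsUnit ((algebraMap ℂ R k - u) * (algebraMap ℂ R k - v)) :=
    (spectrum.notMem_iff.1 fun h => hk0 (hu h)).mul (spectrum.notMem_iff.1 fun h => hk0 (hv h))
  have hfac : (algebraMap ℂ R k - u) * (algebraMap ℂ R k - v)
      = algebraMap ℂ R k * (algebraMap ℂ R k - (u + v)) := by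
    rw [sub_mul, mul_sub, mul_sub, huv, ← Algebra.commutes k u]; noncomm_ring
  rw [hfac, (Algebra.commute_algebraMap_left k _).isUnit_mul_iff] at hunit
  exact spectrum.notMem_iff.2 hunit.2 hk

end QNil

namespace QCommute

variable {R : Type*} [NormedRing R] [NormedAlgebra ℂ R] {q : ℂ} {u v : R}

theorem norm_mul_pow_le (h : QCommute q u v) (hq : ‖q‖ ≤ 1) (n : ℕ) :
    ‖(v * u) ^ n‖ ≤ ‖v ^ n‖ * ‖u ^ n‖ := by
  rw [h.mul_pow, norm_smul, norm_pow]
  exact (mul_le_of_le_one_left (norm_nonneg _) (pow_le_one₀ (norm_nonneg _) hq)).trans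
    (norm_mul_le _ _)

theorem isQNil_mul_of_norm_le_one (h : QCommute q u v) (hq : ‖q‖ ≤ 1)
    (huv : IsQNil u ∨ IsQNil v) : IsQNil (v * u) := by
  rcases huv with hu | hv
  · refine hu.of_norm_pow_le (norm_nonneg v) ?_
    filter_upwards [eventually_ne_atTop 0] with n hn
    exact (h.norm_mul_pow_le hq n).trans
      (mul_le_mul_of_nonneg_right (norm_pow_le' v (Nat.pos_of_ne_zero hn)) (norm_nonneg _))
  · refine hv.of_norm_pow_le (norm_nonneg u) ?_
    filter_upwards [eventually_ne_atTop 0] with n hn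
    rw [mul_comm (‖u‖ ^ n)]
    exact (h.norm_mul_pow_le hq n).trans
      (mul_le_mul_of_nonneg_left (norm_pow_le' u (Nat.pos_of_ne_zero hn)) (norm_nonneg _))

theorem isQNil_mul [CompleteSpace R] (h : QCommute q u v) (hq : q ≠ 0)
    (huv : IsQNil u ∨ IsQNil v) : IsQNil (u * v) := by
  rcases le_or_gt ‖q‖ 1 with hle | hgt
  · exact (h.isQNil_mul_of_norm_le_one hle huv).mul_comm
  · refine (h.symm hq).isQNil_mul_of_norm_le_one ?_ huv.symm
    rw [norm_inv]
    exact inv_le_one_of_one_le₀ hgt.le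

end QCommute

namespace IsGCEP

variable {R : Type*} [NormedRing R] [StarRing R] [NormedAlgebra ℂ R] {b x : R}

theorem eq_zero_of_forall_eq (hb : IsGCEP b x) {w u v : R} {σ : ℂ}
    (hw : ∀ n : ℕ, w = σ ^ (n + 1) • (u * (b ^ n - x * b ^ (n + 1)) * v * x ^ (n + 1))) :
    w = 0 := by
  refine eq_zero_of_norm_le_mul_pow hb.2.2 (C := ‖σ‖ * ‖u‖ * ‖v‖ * ‖x‖)
    (D := ‖σ‖ * ‖x‖) (by positivity) fun n => ?_
  have hprod : ‖u * (b ^ n - x * b ^ (n + 1)) * v * x ^ (n + 1)‖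
      ≤ ‖u‖ * ‖b ^ n - x * b ^ (n + 1)‖ * ‖v‖ * ‖x‖ ^ (n + 1) := by
    refine (norm_mul_le _ _).trans (mul_le_mul ?_ (norm_pow_le' x n.succ_pos) (norm_nonneg _)
      (by positivity))
    exact (norm_mul_le _ _).trans (mul_le_mul_of_nonneg_right (norm_mul_le _ _) (norm_nonneg _))
  calc ‖w‖ ≤ ‖σ‖ ^ (n + 1) * (‖u‖ * ‖b ^ n - x * b ^ (n + 1)‖ * ‖v‖ * ‖x‖ ^ (n + 1)) := by
        rw [hw n, norm_smul, norm_pow]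
        exact mul_le_mul_of_nonneg_left hprod (by positivity)
    _ = ‖σ‖ * ‖u‖ * ‖v‖ * ‖x‖ * ((‖σ‖ * ‖x‖) ^ n * ‖b ^ n - x * b ^ (n + 1)‖) := by ring

theorem mul_sq_mul (hb : IsGCEP b x) : x * b ^ 2 * x = b * x := by
  refine (sub_eq_zero.1 (hb.eq_zero_of_forall_eq (u := 1) (v := b) (σ := 1) fun n => ?_)).symm
  have hp := pow_succ_mul_pow_succ_of_eq_mul_sq hb.1 n
  calc b * x - x * b ^ 2 * x = b ^ (n + 1) * x ^ (n + 1) - x * b * (b ^ (n + 1) * x ^ (n + 1)) := by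
        rw [hp, sq]; simp only [mul_assoc]
    _ = _ := by
        rw [one_pow, one_smul, one_mul, sub_mul, sub_mul, ← pow_succ b n]
        simp only [mul_assoc]
        rw [(Commute.self_pow b (n + 1)).left_comm]

theorem proj_mul_mul_proj (hb : IsGCEP b x) {d : R} {σ : ℂ} (hd : QCommute σ d b) :
    b * x * d * (b * x) = d * (b * x) := by
  refine (sub_eq_zero.1 (hb.eq_zero_of_forall_eq (u := b) (v := d) (σ := σ) fun n => ?_)).symm
  have hp := pow_succ_mul_pow_succ_of_eq_mul_sq hb.1 n
  calc d * (b * x) - b * x * d * (b * x)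
      = d * b ^ (n + 1) * x ^ (n + 1) - b * x * (d * b ^ (n + 1) * x ^ (n + 1)) := by
        rw [mul_assoc d, hp]; simp only [mul_assoc]
    _ = σ ^ (n + 1) •
          (b ^ (n + 1) * d * x ^ (n + 1) - b * x * (b ^ (n + 1) * d * x ^ (n + 1))) := by
        rw [hd.pow_right (n + 1)]; simp only [smul_mul_assoc, mul_smul_comm, smul_sub]
    _ = _ := by
        rw [mul_sub b, ← pow_succ' b n, ← mul_assoc b x]
        simp only [sub_mul, mul_assoc]

theorem commute_proj (hb : IsGCEP b x) {c : R} {ν ρ : ℂ} (hc : QCommute ν c b)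
    (hc' : QCommute ρ (star c) b) : Commute c (b * x) := by
  have hp : star x * star b = b * x := by simpa using hb.2.1
  have h := congrArg star (hb.proj_mul_mul_proj hc')
  simp only [star_mul, star_star, hp] at h
  calc c * (b * x) = b * x * c * (b * x) := (hb.proj_mul_mul_proj hc).symm
    _ = b * x * c := by rw [mul_assoc (b * x) c, h]

theorem qCommute (hb : IsGCEP b x) {c : R} {ν : ℂ} (hc : QCommute ν c b)
    (hcp : Commute c (b * x)) : QCommute ν x c := by
  rw [QCommute, ← sub_eq_zero]
  set w := x * c - ν • (c * x) with hw
  have hbw : b * w = 0 := by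
    rw [hw, mul_sub, mul_smul_comm, ← mul_assoc b c, ← smul_mul_assoc, ← hc, ← mul_assoc,
      mul_assoc c, hcp.eq, sub_self]
  have hpw : b * x * w = w := by
    rw [hw, mul_sub, mul_smul_comm, ← mul_assoc, ← mul_assoc, ← hcp.eq, mul_assoc c, mul_assoc b,
      ← sq, ← hb.1]
  calc w = x * b ^ 2 * x * w := by rw [hb.mul_sq_mul, hpw]
    _ = x * b * (b * x * w) := by simp only [sq, mul_assoc]
    _ = 0 := by rw [hpw, mul_assoc, hbw, mul_zero]

end IsGCEP

theorem isGCEP_iff {R : Type*} [NormedRing R] [StarRing R] [NormedAlgebra ℂ R] {b x : R} :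
    IsGCEP b x ↔
      x = b * x ^ 2 ∧ star (b * x) = b * x ∧ x * b ^ 2 * x = b * x ∧ IsQNil (b - x * b ^ 2) :=
  ⟨fun hb => ⟨hb.1, hb.2.1, hb.mul_sq_mul, (isQNil_sub_mul_sq_iff hb.mul_sq_mul).2 hb.2.2⟩,
    fun ⟨h1, h2, h3, h4⟩ => ⟨h1, h2, (isQNil_sub_mul_sq_iff h3).1 h4⟩⟩

theorem isQNil_mul_sub_of_qCommute {R : Type*} [NormedRing R] [NormedAlgebra ℂ R]
    [CompleteSpace R] {a b x y : R} {l : ℂ} (hl : l ≠ 0)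
    (hab : QCommute l a b) (hay : QCommute l⁻¹ a y) (hxb : QCommute l⁻¹ x b)
    (hxy : QCommute l x y) (hyb : y * b ^ 2 * y = b * y)
    (hsa : IsQNil (a - x * a ^ 2)) (hsb : IsQNil (b - y * b ^ 2)) :
    IsQNil (a * b - y * x * (a * b) ^ 2) := by
  have hat : QCommute l a (y * b ^ 2) := by
    convert hay.mul_right (hab.pow_right 2) using 1; field_simp
  have hxt : QCommute l⁻¹ x (y * b ^ 2) := by
    convert hxy.mul_right (hxb.pow_right 2) using 1; field_simp
  have hrt : QCommute l (x * a ^ 2) (y * b ^ 2) := by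
    convert hxt.mul_left (hat.pow_left 2) using 1; field_simp
  have hrb : QCommute l (x * a ^ 2) b := by
    convert hxb.mul_left (hab.pow_left 2) using 1; field_simp
  have hsat := hat.sub_left hrt
  have hprod : y * x * (a * b) ^ 2 = x * a ^ 2 * (y * b ^ 2) := by
    calc y * x * (a * b) ^ 2 = y * (x * a * b) * (a * b) := by simp only [sq, mul_assoc]
      _ = y * b * (x * a ^ 2 * b) := by
          rw [(hxb.commute_mul_left hl hab).eq]; simp only [sq, mul_assoc]
      _ = x * a ^ 2 * (y * b ^ 2) := by
          rw [hrb, mul_smul_comm, hrt]; simp only [sq, mul_assoc]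
  have hsbt : (b - y * b ^ 2) * (y * b ^ 2) = 0 := by
    rw [sub_mul, ← mul_assoc b y, ← mul_assoc (y * b ^ 2), hyb, sub_self]
  rw [hprod, show a * b - x * a ^ 2 * (y * b ^ 2)
    = a * (b - y * b ^ 2) + (a - x * a ^ 2) * (y * b ^ 2) by noncomm_ring]
  refine IsQNil.add_of_mul_eq_zero ?_ ((hab.sub_right hat).isQNil_mul hl (.inr hsb))
    (hsat.isQNil_mul hl (.inl hsa))
  rw [hsat, mul_smul_comm, mul_assoc, ← mul_assoc (b - y * b ^ 2), hsbt, zero_mul, mul_zero,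
    smul_zero]

theorem IsGCEP.mul {R : Type*} [NormedRing R] [StarRing R] [NormedAlgebra ℂ R] [CompleteSpace R]
    {a b x y : R} {l : ℂ} (ha : IsGCEP a x) (hb : IsGCEP b y) (hl : l ≠ 0)
    (hab : QCommute l a b) (hay : QCommute l⁻¹ a y) (hxb : QCommute l⁻¹ x b)
    (hxy : QCommute l x y) (haq : Commute a (b * y)) (hxq : Commute x (b * y)) :
    IsGCEP (a * b) (y * x) := by
  rw [isGCEP_iff] at ha hb ⊢
  obtain ⟨hx, hp, hxa, hsa⟩ := ha
  obtain ⟨hy, hq, hyb, hsb⟩ := hb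
  have hxab := hxb.commute_mul_left hl hab
  have hcy : a * b * (y * x) = b * y * (a * x) := by
    rw [mul_assoc, ← mul_assoc b, ← mul_assoc, haq.eq, mul_assoc]
  have hyc : y * x * (a * b) = y * b * (x * a) := by
    rw [mul_assoc, ← mul_assoc x, hxab.eq, mul_assoc]
  refine ⟨?_, ?_, ?_, isQNil_mul_sub_of_qCommute hl hab hay hxb hxy hyb hsa hsb⟩
  · symm
    calc a * b * (y * x) ^ 2 = a * (b * y * (x * y) * x) := by simp only [sq, mul_assoc]
      _ = l • (a * (b * y ^ 2) * x ^ 2) := by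
          rw [hxy]; simp only [sq, mul_assoc, smul_mul_assoc, mul_smul_comm]
      _ = y * (a * x ^ 2) := by
          rw [← hy, hay, smul_mul_assoc, smul_smul, mul_inv_cancel₀ hl, one_smul, mul_assoc]
      _ = y * x := by rw [← hx]
  · rw [hcy, star_mul, hp, hq]
    exact (haq.mul_left hxq).eq
  · calc y * x * (a * b) ^ 2 * (y * x) = y * x * (a * b) * (a * b * (y * x)) := by
          simp only [sq, mul_assoc]
      _ = y * b * (b * y) * (x * a * (a * x)) := by
          rw [hyc, hcy, mul_assoc (y * b), ← mul_assoc (x * a), (hxq.mul_left haq).eq]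
          simp only [mul_assoc]
      _ = y * b ^ 2 * y * (x * a ^ 2 * x) := by simp only [sq, mul_assoc]
      _ = a * b * (y * x) := by rw [hyb, hxa, hcy]

theorem stmt5 (a b ag bg : A) (l m : ℂ) (hl : l ≠ 0) (hm : m ≠ 0)
    (ha : IsGCEP a ag) (hb : IsGCEP b bg)
    (h1 : a * b = l • (b * a)) (h2 : star a * b = m • (b * star a)) :
    IsGCEP (a * b) (bg * ag) ∧ bg * ag = l⁻¹ • (ag * bg) := by
  have hab : QCommute l a b := h1
  have hasb : QCommute m (star a) b := h2
  have haq : Commute a (b * bg) := hb.commute_proj hab hasb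
  have hya : QCommute l bg a := hb.qCommute hab haq
  have hysa : QCommute m bg (star a) :=
    hb.qCommute hasb (hb.commute_proj hasb (by rwa [star_star]))
  have hba : QCommute l⁻¹ b a := hab.symm hl
  have hxb : QCommute l⁻¹ ag b :=
    ha.qCommute hba (ha.commute_proj hba (by simpa using hasb.star))
  have hsya : QCommute (star m)⁻¹ (star bg) a :=
    (by simpa using hysa.star : QCommute (star m) a (star bg)).symm (star_ne_zero.2 hm)
  have hxy : QCommute l ag bg := ha.qCommute hya (ha.commute_proj hya hsya)
  have hqa : QCommute (1 : ℂ) (b * bg) a := haq.symm.qCommute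
  have hxq : Commute ag (b * bg) :=
    (ha.qCommute hqa (ha.commute_proj hqa (by rwa [hb.2.1]))).commute
  exact ⟨ha.mul hb hl hab (hya.symm hl) hxb hxy haq hxq, hxy.symm hl⟩
end

section
/- Let A be a complex Banach *-algebra with identity, a ∈ A, and k ∈ ℕ, k ≥ 1. If a^k has a generalized core-EP inverse y = (a^k)^⊕, then a has a generalized core-EP inverse given by a^⊕ = a^{k-1} y. -/
open Filter Topology

variable {A : Type*} [NormedRing A] [StarRing A] [NormedAlgebra ℂ A] [StarModule ℂ A]
  [CompleteSpace A]

private lemma rpow_crit {u : ℕ → ℝ} (hu : ∀ n, 0 ≤ u n) :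
    Tendsto (fun n : ℕ => (u n) ^ ((1:ℝ)/n)) atTop (𝓝 0) ↔
      ∀ ε : ℝ, 0 < ε → ∀ᶠ n : ℕ in atTop, u n ≤ ε ^ n := by
  constructor
  · intro h ε hε
    filter_upwards [h.eventually (gt_mem_nhds hε), eventually_ge_atTop 1] with n h1 h2
    have hn : (n:ℝ) ≠ 0 := Nat.cast_ne_zero.mpr (by omega)
    have hx : u n = (u n ^ ((1:ℝ)/n)) ^ n := by
      rw [← Real.rpow_natCast (u n ^ ((1:ℝ)/n)) n, ← Real.rpow_mul (hu n),
        one_div_mul_cancel hn, Real.rpow_one]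
    rw [hx]
    exact pow_le_pow_left₀ (Real.rpow_nonneg (hu n) _) h1.le n
  · intro h
    rw [Metric.tendsto_atTop]
    intro ε hε
    have h2 := h (ε/2) (by positivity)
    rw [eventually_atTop] at h2
    obtain ⟨N, hN⟩ := h2
    refine ⟨max N 1, fun n hn => ?_⟩
    have hn1 : 1 ≤ n := le_trans (le_max_right N 1) hn
    have hnN : N ≤ n := le_trans (le_max_left N 1) hn
    have hnz : (n:ℝ) ≠ 0 := Nat.cast_ne_zero.mpr (by omega)
    have key : u n ^ ((1:ℝ)/n) ≤ ε/2 := by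
      calc u n ^ ((1:ℝ)/n) ≤ ((ε/2)^n) ^ ((1:ℝ)/n) :=
            Real.rpow_le_rpow (hu n) (hN n hnN) (by positivity)
        _ = ε/2 := by
            rw [← Real.rpow_natCast (ε/2) n, ← Real.rpow_mul (by positivity),
              mul_one_div_cancel hnz, Real.rpow_one]
    rw [Real.dist_eq, sub_zero, abs_of_nonneg (Real.rpow_nonneg (hu n) _)]
    linarith

theorem stmt6 (a y : A) (k : ℕ) (hk : 1 ≤ k) (h : IsGCEP (a ^ k) y) :
    IsGCEP a (a ^ (k - 1) * y) := by
  obtain ⟨h1, h2, h3⟩ := h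
  have hk1 : k - 1 + 1 = k := by omega
  -- a * a^(k-1) = a^k
  have hak : a * a ^ (k - 1) = a ^ k := by
    rw [← pow_succ' a (k-1), hk1]
  -- key power identity:  (a^k)^m * y^(m+1) = y
  have hA : ∀ m : ℕ, (a ^ k) ^ m * y ^ (m + 1) = y := by
    intro m
    induction m with
    | zero => simpa using h1.symm
    | succ m ih =>
      have e : (a ^ k) ^ (m+1) * y ^ (m+1+1) = a ^ k * ((a ^ k) ^ m * y ^ (m+1)) * y := by
        rw [pow_succ' (a^k) m, pow_succ y (m+1)]
        rw [mul_assoc (a^k), ← mul_assoc ((a^k)^m), mul_assoc (a^k)]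
      rw [e, ih]
      calc a ^ k * y * y = a ^ k * y ^ 2 := by rw [pow_two, mul_assoc]
        _ = y := h1.symm
  -- (a^k*y) * y = y
  have hpy : a ^ k * y * y = y := by
    calc a ^ k * y * y = a ^ k * y ^ 2 := by rw [pow_two, mul_assoc]
      _ = y := h1.symm
  -- projection relation with the "s" sequence
  have hps : ∀ m : ℕ, (a^k)^m - (a^k*y) * (a^k)^m
      = (1 - a^k*y) * ((a^k)^m - y * (a^k)^(m+1)) := by
    intro m
    rw [sub_mul, one_mul, mul_sub, ← mul_assoc (a^k*y) y, hpy]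
    abel
  -- eventual smallness of s
  have h3' : ∀ ε : ℝ, 0 < ε → ∀ᶠ m : ℕ in atTop,
      ‖(a^k)^m - y * (a^k)^(m+1)‖ ≤ ε ^ m :=
    (rpow_crit (fun n => norm_nonneg _)).mp h3
  -- commuting powers
  have hcomm : ∀ m : ℕ, a^(k-1) * (a^k)^m = (a^k)^m * a^(k-1) := by
    intro m
    rw [← pow_mul]
    exact pow_mul_comm a (k-1) (k*m)
  -- Lemma D : (a^k*y) * (a^(k-1)*y) = a^(k-1)*y
  have hD : a^k*y * (a^(k-1)*y) = a^(k-1)*y := by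
    have hv : ∀ m : ℕ, a^(k-1)*y - a^k*y * (a^(k-1)*y)
        = ((1 - a^k*y) * ((a^k)^m - y * (a^k)^(m+1))) * (a^(k-1) * y^(m+1)) := by
      intro m
      rw [← hps m]
      have e2 : a^(k-1) * y = (a^k)^m * (a^(k-1) * y^(m+1)) := by
        rw [← mul_assoc, ← hcomm m, mul_assoc, hA m]
      rw [sub_mul, mul_assoc (a^k*y), ← e2]
    obtain ⟨K, hK⟩ : ∃ K : ℝ, ‖(1:A) - a^k*y‖ * ‖a^(k-1)‖ = K := ⟨_, rfl⟩
    have hK0 : 0 ≤ K := hK ▸ mul_nonneg (norm_nonneg _) (norm_nonneg _)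
    have hnv : ∀ m : ℕ, ‖a^(k-1)*y - a^k*y * (a^(k-1)*y)‖
        ≤ K * (‖(a^k)^m - y * (a^k)^(m+1)‖ * ‖y‖^(m+1)) := by
      intro m
      rw [hv m]
      calc ‖((1 - a^k*y) * ((a^k)^m - y * (a^k)^(m+1))) * (a^(k-1) * y^(m+1))‖
          ≤ ‖(1 - a^k*y) * ((a^k)^m - y * (a^k)^(m+1))‖ * ‖a^(k-1) * y^(m+1)‖ :=
            norm_mul_le _ _
        _ ≤ (‖(1:A) - a^k*y‖ * ‖(a^k)^m - y * (a^k)^(m+1)‖) * (‖a^(k-1)‖ * ‖y^(m+1)‖) :=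
            mul_le_mul (norm_mul_le _ _) (norm_mul_le _ _) (norm_nonneg _)
              (mul_nonneg (norm_nonneg _) (norm_nonneg _))
        _ ≤ (‖(1:A) - a^k*y‖ * ‖(a^k)^m - y * (a^k)^(m+1)‖) * (‖a^(k-1)‖ * ‖y‖^(m+1)) := by
            gcongr
            exact norm_pow_le' y (Nat.succ_pos m)
        _ = K * (‖(a^k)^m - y * (a^k)^(m+1)‖ * ‖y‖^(m+1)) := by rw [← hK]; ring
    set ε₀ : ℝ := (2*(‖y‖+1))⁻¹ with hε₀
    have hε₀pos : 0 < ε₀ := by positivity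
    have hε₀y : ε₀ * ‖y‖ ≤ 1/2 := by
      rw [hε₀, inv_mul_le_iff₀ (by positivity)]
      have := norm_nonneg y
      linarith
    have hev : ∀ᶠ m : ℕ in atTop, ‖a^(k-1)*y - a^k*y * (a^(k-1)*y)‖ ≤ (K * ‖y‖) * (1/2)^m := by
      filter_upwards [h3' ε₀ hε₀pos] with m hm
      calc ‖a^(k-1)*y - a^k*y * (a^(k-1)*y)‖
          ≤ K * (‖(a^k)^m - y * (a^k)^(m+1)‖ * ‖y‖^(m+1)) := hnv m
        _ ≤ K * (ε₀^m * ‖y‖^(m+1)) := by gcongr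
        _ = (K * ‖y‖) * (ε₀ * ‖y‖)^m := by rw [pow_succ, mul_pow]; ring
        _ ≤ (K * ‖y‖) * (1/2)^m := by gcongr
    have hlim : Tendsto (fun m : ℕ => (K * ‖y‖) * (1/2)^m) atTop (𝓝 0) := by
      rw [show (0:ℝ) = (K * ‖y‖) * 0 by ring]
      exact (tendsto_pow_atTop_nhds_zero_of_lt_one (by norm_num) (by norm_num)).const_mul _
    have hle0 : ‖a^(k-1)*y - a^k*y * (a^(k-1)*y)‖ ≤ 0 := ge_of_tendsto hlim hev
    have hv0 : a^(k-1)*y - a^k*y * (a^(k-1)*y) = 0 := norm_le_zero_iff.mp hle0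
    exact (sub_eq_zero.mp hv0).symm
  refine ⟨?_, ?_, ?_⟩
  · -- x = a x²
    calc a^(k-1)*y = a^k*y * (a^(k-1)*y) := hD.symm
      _ = a * (a^(k-1)*y) * (a^(k-1)*y) := by rw [← hak, mul_assoc a, ← mul_assoc]
      _ = a * (a^(k-1)*y)^2 := by rw [pow_two, mul_assoc]
  · -- star condition
    have e : a * (a^(k-1)*y) = a^k * y := by rw [← mul_assoc, hak]
    rw [e]; exact h2
  · -- limit condition
    rw [rpow_crit (fun n => norm_nonneg _)]
    intro ε hε
    set η : ℝ := min ε 1 with hη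
    have hη0 : 0 < η := lt_min hε one_pos
    have hη1 : η ≤ 1 := min_le_right _ _
    have hηε : η ≤ ε := min_le_left _ _
    set δ : ℝ := η^(3*k)/2 with hδ
    have hδ0 : 0 < δ := by positivity
    have hs := h3' δ hδ0
    have h2q : ∀ᶠ q : ℕ in atTop, ‖a^(k-1)‖ * (∑ j ∈ Finset.range k, ‖a^j‖) ≤ 2^q :=
      (tendsto_pow_atTop_atTop_of_one_lt (by norm_num : (1:ℝ) < 2)).eventually_ge_atTop _
    rw [eventually_atTop] at hs h2q
    obtain ⟨Q1, hQ1⟩ := hs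
    obtain ⟨Q2, hQ2⟩ := h2q
    rw [eventually_atTop]
    refine ⟨k*Q1 + k*Q2 + 3*k, fun n hn => ?_⟩
    set m : ℕ := n - (k-1) with hmdef
    have hm : k - 1 + m = n := by omega
    set q : ℕ := m / k with hq
    set r : ℕ := m % k with hr
    have hqr : k*q + r = m := Nat.div_add_mod m k
    have hrk : r < k := Nat.mod_lt _ (by omega)
    have hq1 : 1 ≤ q := by
      rw [hq, Nat.le_div_iff_mul_le (by omega)]
      omega
    have hqQ1 : Q1 ≤ q := by
      rw [hq, Nat.le_div_iff_mul_le (by omega)]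
      have : Q1 * k ≤ k * Q1 := by rw [Nat.mul_comm]
      omega
    have hqQ2 : Q2 ≤ q := by
      rw [hq, Nat.le_div_iff_mul_le (by omega)]
      have : Q2 * k ≤ k * Q2 := by rw [Nat.mul_comm]
      omega
    have hn3 : n ≤ 3*(k*q) := by
      have h1' : k ≤ k*q := Nat.le_mul_of_pos_right k (by omega)
      omega
    -- power decompositions
    have ham : (a^k)^q * a^r = a^m := by
      rw [← pow_mul, ← pow_add, hqr]
    have epow1 : a^(k-1) * a^m = a^n := by
      rw [← pow_add, hm]
    have epow2 : a^k * a^m = a^(n+1) := by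
      rw [← pow_add]
      congr 1
      omega
    have key : a^n - a^(k-1)*y*a^(n+1)
        = a^(k-1) * (((a^k)^q - y * (a^k)^(q+1)) * a^r) := by
      have e3 : (a^k)^(q+1) * a^r = a^(n+1) := by
        rw [pow_succ' (a^k) q, mul_assoc, ham, epow2]
      rw [sub_mul, mul_sub, ham, mul_assoc y, e3, epow1, ← mul_assoc]
    rw [key]
    have hbound : ‖a^(k-1) * (((a^k)^q - y * (a^k)^(q+1)) * a^r)‖
        ≤ (‖a^(k-1)‖ * (∑ j ∈ Finset.range k, ‖a^j‖)) * ‖(a^k)^q - y * (a^k)^(q+1)‖ := by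
      have har : ‖a^r‖ ≤ ∑ j ∈ Finset.range k, ‖a^j‖ :=
        Finset.single_le_sum (fun i _ => norm_nonneg (a^i)) (Finset.mem_range.mpr hrk)
      calc ‖a^(k-1) * (((a^k)^q - y * (a^k)^(q+1)) * a^r)‖
          ≤ ‖a^(k-1)‖ * (‖(a^k)^q - y * (a^k)^(q+1)‖ * ‖a^r‖) :=
            le_trans (norm_mul_le _ _) (by gcongr; exact norm_mul_le _ _)
        _ ≤ ‖a^(k-1)‖ * (‖(a^k)^q - y * (a^k)^(q+1)‖ * (∑ j ∈ Finset.range k, ‖a^j‖)) := by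
            gcongr
        _ = (‖a^(k-1)‖ * (∑ j ∈ Finset.range k, ‖a^j‖)) * ‖(a^k)^q - y * (a^k)^(q+1)‖ := by
            ring
    calc ‖a^(k-1) * (((a^k)^q - y * (a^k)^(q+1)) * a^r)‖
        ≤ (‖a^(k-1)‖ * (∑ j ∈ Finset.range k, ‖a^j‖)) * ‖(a^k)^q - y * (a^k)^(q+1)‖ := hbound
      _ ≤ 2^q * δ^q := by
          have := hQ1 q hqQ1
          have := hQ2 q hqQ2
          gcongr
      _ = (2*δ)^q := by rw [mul_pow]
      _ = (η^(3*k))^q := by rw [hδ]; ring_nf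
      _ = η^(3*(k*q)) := by rw [← pow_mul]; ring_nf
      _ ≤ η^n := pow_le_pow_of_le_one hη0.le hη1 hn3
      _ ≤ ε^n := pow_le_pow_left₀ hη0.le hηε n
end

section
/- Let A be a complex Banach *-algebra with identity, a ∈ A with generalized core-EP inverse a^⊕, and k ∈ ℕ, k ≥ 1. Then a^k has a generalized core-EP inverse and (a^k)^⊕ = (a^⊕)^k. -/
open Filter Topology

variable {A : Type*} [NormedRing A] [StarRing A] [NormedAlgebra ℂ A] [StarModule ℂ A]
  [CompleteSpace A]

lemma gcep_aux_x_pow (a x : A) (h1 : x = a * x ^ 2) (n : ℕ) : x = a ^ n * x ^ (n + 1) := by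
  induction n with
  | zero => simp
  | succ n ih =>
    calc x = a ^ n * x ^ (n + 1) := ih
    _ = a ^ n * (x * x ^ n) := by rw [pow_succ']
    _ = a ^ n * ((a * x ^ 2) * x ^ n) := by rw [← h1]
    _ = a ^ (n + 1) * x ^ (n + 2) := by
        rw [pow_succ a n, show n + 2 = 2 + n from by omega, pow_add x 2 n]
        noncomm_ring

lemma gcep_aux_ax_pow (a x : A) (h1 : x = a * x ^ 2) (n : ℕ) (hn : 1 ≤ n) :
    a ^ n * x ^ n = a * x := by
  induction n with
  | zero => omega
  | succ n ih =>
    rcases Nat.eq_or_lt_of_le hn with h | h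
    · simp [← h]
    · have hn1 : 1 ≤ n := by omega
      calc a ^ (n + 1) * x ^ (n + 1) = a * (a ^ n * x ^ n) * x := by
            rw [pow_succ' a n, pow_succ x n]; noncomm_ring
      _ = a * (a * x) * x := by rw [ih hn1]
      _ = a * (a * x ^ 2) := by noncomm_ring
      _ = a * x := by rw [← h1]

lemma gcep_sum_id (a x : A) (k n : ℕ) :
    a ^ n - x ^ k * a ^ (n + k) =
      ∑ j ∈ Finset.range k, x ^ j * (a ^ (n + j) - x * a ^ (n + j + 1)) := by
  induction k with
  | zero => simp
  | succ k ih =>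
    rw [Finset.sum_range_succ, ← ih, pow_succ x k, show n + (k + 1) = n + k + 1 from rfl]
    rw [pow_succ a (n + k)]
    noncomm_ring

lemma qnil_of_eventually (g : ℕ → A)
    (H : ∀ ε : ℝ, 0 < ε → ∀ᶠ n in atTop, ‖g n‖ ≤ ε ^ n) :
    Tendsto (fun n : ℕ => ‖g n‖ ^ ((1 : ℝ) / n)) atTop (𝓝 0) := by
  rw [Metric.tendsto_atTop]
  intro ε hε
  set δ : ℝ := min 1 (ε / 2) with hδdef
  have hδ0 : 0 < δ := lt_min one_pos (by positivity)
  have hδε : δ < ε := lt_of_le_of_lt (min_le_right _ _) (by linarith)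
  obtain ⟨N, hN⟩ := (H δ hδ0).exists_forall_of_atTop
  refine ⟨max N 1, fun n hn => ?_⟩
  have hn1 : 1 ≤ n := le_trans (le_max_right _ _) hn
  have hnN : N ≤ n := le_trans (le_max_left _ _) hn
  have hne : (n : ℝ) ≠ 0 := Nat.cast_ne_zero.mpr (by omega)
  have h1 : ‖g n‖ ^ ((1 : ℝ) / n) ≤ ((δ ^ n : ℝ)) ^ ((1 : ℝ) / n) :=
    Real.rpow_le_rpow (norm_nonneg _) (hN n hnN) (by positivity)
  have h2 : ((δ ^ n : ℝ)) ^ ((1 : ℝ) / n) = δ := by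
    rw [← Real.rpow_natCast δ n, ← Real.rpow_mul hδ0.le]
    rw [mul_one_div, div_self hne, Real.rpow_one]
  rw [Real.dist_eq, sub_zero, abs_of_nonneg (Real.rpow_nonneg (norm_nonneg _) _)]
  calc ‖g n‖ ^ ((1 : ℝ) / n) ≤ δ := by rw [← h2]; exact h1
  _ < ε := hδε

lemma eventually_of_qnil (g : ℕ → A)
    (H : Tendsto (fun n : ℕ => ‖g n‖ ^ ((1 : ℝ) / n)) atTop (𝓝 0)) :
    ∀ ε : ℝ, 0 < ε → ∀ᶠ n in atTop, ‖g n‖ ≤ ε ^ n := by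
  intro ε hε
  have h1 : ∀ᶠ n in atTop, ‖g n‖ ^ ((1 : ℝ) / n) < ε := H.eventually (gt_mem_nhds hε)
  filter_upwards [h1, eventually_ge_atTop 1] with n hn hn1
  have hne : (n : ℝ) ≠ 0 := Nat.cast_ne_zero.mpr (by omega)
  have h2 : (‖g n‖ ^ ((1 : ℝ) / n)) ^ n = ‖g n‖ := by
    rw [← Real.rpow_natCast (‖g n‖ ^ ((1 : ℝ) / n)) n, ← Real.rpow_mul (norm_nonneg _)]
    rw [one_div_mul_cancel hne, Real.rpow_one]
  calc ‖g n‖ = (‖g n‖ ^ ((1 : ℝ) / n)) ^ n := h2.symm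
  _ ≤ ε ^ n := pow_le_pow_left₀ (Real.rpow_nonneg (norm_nonneg _) _) hn.le n

theorem stmt7 (a x : A) (k : ℕ) (hk : 1 ≤ k) (h : IsGCEP a x) :
    IsGCEP (a ^ k) (x ^ k) := by
  obtain ⟨h1, h2, h3⟩ := h
  refine ⟨?_, ?_, ?_⟩
  · -- x^k = a^k * (x^k)^2
    have := gcep_aux_x_pow a x h1 k
    calc x ^ k = x * x ^ (k - 1) := by
          rw [← pow_succ' x (k - 1)]; congr 1; omega
    _ = a ^ k * x ^ (k + 1) * x ^ (k - 1) := by rw [← this]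
    _ = a ^ k * (x ^ k) ^ 2 := by
        have hkk : k + 1 + (k - 1) = k * 2 := by omega
        rw [mul_assoc, ← pow_add, hkk, pow_mul]
  · -- star
    have hax : a ^ k * x ^ k = a * x := gcep_aux_ax_pow a x h1 k hk
    rw [hax, h2]
  · -- quasinilpotent part
    apply qnil_of_eventually
    intro ε hε
    set z : ℕ → A := fun m => a ^ m - x * a ^ (m + 1) with hz
    have hkey : ∀ n : ℕ, (a ^ k) ^ n - x ^ k * (a ^ k) ^ (n + 1) =
        ∑ j ∈ Finset.range k, x ^ j * z (k * n + j) := by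
      intro n
      have : (a ^ k) ^ n = a ^ (k * n) := by rw [← pow_mul]
      have h2' : (a ^ k) ^ (n + 1) = a ^ (k * n + k) := by
        rw [← pow_mul, Nat.mul_succ]
      rw [this, h2', gcep_sum_id a x k (k * n)]
    set C : ℝ := ∑ j ∈ Finset.range k, ‖x ^ j‖ with hC
    set δ : ℝ := min 1 (ε / 2) with hδdef
    have hδ0 : 0 < δ := lt_min one_pos (by positivity)
    have hδ1 : δ ≤ 1 := min_le_left _ _
    have hδε : δ ≤ ε / 2 := min_le_right _ _
    obtain ⟨N1, hN1⟩ := (eventually_of_qnil z h3 δ hδ0).exists_forall_of_atTop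
    obtain ⟨N2, hN2⟩ := pow_unbounded_of_one_lt C (one_lt_two (α := ℝ))
    filter_upwards [eventually_ge_atTop (max N1 N2)] with n hn
    have hnN1 : N1 ≤ n := le_trans (le_max_left _ _) hn
    have hnN2 : N2 ≤ n := le_trans (le_max_right _ _) hn
    have hC2 : C ≤ 2 ^ n := le_trans hN2.le (pow_le_pow_right₀ one_le_two hnN2)
    rw [hkey n]
    calc ‖∑ j ∈ Finset.range k, x ^ j * z (k * n + j)‖
        ≤ ∑ j ∈ Finset.range k, ‖x ^ j * z (k * n + j)‖ := norm_sum_le _ _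
    _ ≤ ∑ j ∈ Finset.range k, ‖x ^ j‖ * δ ^ (k * n) := by
        apply Finset.sum_le_sum
        intro j _
        refine le_trans (norm_mul_le _ _) (mul_le_mul_of_nonneg_left ?_ (norm_nonneg _))
        have hm : N1 ≤ k * n + j := le_trans hnN1 (by nlinarith)
        calc ‖z (k * n + j)‖ ≤ δ ^ (k * n + j) := hN1 _ hm
        _ ≤ δ ^ (k * n) := pow_le_pow_of_le_one hδ0.le hδ1 (by omega)
    _ = C * δ ^ (k * n) := by rw [← Finset.sum_mul]
    _ ≤ 2 ^ n * (ε / 2) ^ n := by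
        have hδk : δ ^ k ≤ ε / 2 := by
          calc δ ^ k ≤ δ ^ 1 := pow_le_pow_of_le_one hδ0.le hδ1 hk
          _ = δ := pow_one δ
          _ ≤ ε / 2 := hδε
        have : δ ^ (k * n) ≤ (ε / 2) ^ n := by
          rw [pow_mul]
          exact pow_le_pow_left₀ (pow_nonneg hδ0.le k) hδk n
        exact mul_le_mul hC2 this (by positivity) (by positivity)
    _ = ε ^ n := by rw [← mul_pow]; ring_nf
end

section
/- Let A be a complex Banach *-algebra with identity and let a, b ∈ A have generalized core-EP inverses a^⊕ and b^⊕. Let p = a a^⊕. Then b has generalized core-EP order above a (a ≤^⊕ b, i.e., a a^⊕ = b a^⊕ and a^⊕ a = a^⊕ b) if and only if (1-p) b p = 0, p b p = p a p, and p b (1-p) = p a (1-p). -/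
open Filter Topology

variable {A : Type*} [NormedRing A] [StarRing A] [NormedAlgebra ℂ A] [StarModule ℂ A]
  [CompleteSpace A]

/-- If `‖q n‖^(1/n) → 0` then `‖q n‖ * r^n → 0` for any `r ≥ 0`. -/
lemma gcep_aux_tendsto {q : ℕ → A}
    (h : Tendsto (fun n : ℕ => ‖q n‖ ^ ((1 : ℝ) / n)) atTop (𝓝 0))
    {r : ℝ} (hr : 0 ≤ r) :
    Tendsto (fun n : ℕ => ‖q n‖ * r ^ n) atTop (𝓝 0) := by
  have hr1 : (0:ℝ) < r + 1 := by linarith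
  set δ : ℝ := (1/2) / (r + 1) with hδdef
  have hδ : 0 < δ := by positivity
  have hev : ∀ᶠ n : ℕ in atTop, ‖q n‖ ^ ((1 : ℝ) / n) < δ :=
    h.eventually_lt_const hδ
  apply squeeze_zero' (g := fun n : ℕ => (1/2 : ℝ) ^ n)
  · filter_upwards with n
    positivity
  · filter_upwards [hev, eventually_ge_atTop 1] with n hn hn1
    have hn0 : (n : ℝ) ≠ 0 := by
      exact Nat.cast_ne_zero.mpr (by omega)
    have hqeq : ‖q n‖ = (‖q n‖ ^ ((1 : ℝ) / n)) ^ (n : ℕ) := by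
      rw [← Real.rpow_natCast (‖q n‖ ^ ((1 : ℝ) / n)) n,
        ← Real.rpow_mul (norm_nonneg _)]
      rw [one_div, inv_mul_cancel₀ hn0, Real.rpow_one]
    have hq : ‖q n‖ ≤ δ ^ n := by
      rw [hqeq]
      exact pow_le_pow_left₀ (Real.rpow_nonneg (norm_nonneg _) _) hn.le n
    have hδr : δ * r ≤ 1/2 := by
      have : δ * (r + 1) = 1/2 := by
        rw [hδdef]; field_simp
      nlinarith
    calc ‖q n‖ * r ^ n ≤ δ ^ n * r ^ n :=
          mul_le_mul_of_nonneg_right hq (pow_nonneg hr n)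
      _ = (δ * r) ^ n := (mul_pow _ _ _).symm
      _ ≤ (1/2) ^ n := pow_le_pow_left₀ (by positivity) hδr n
  · exact tendsto_pow_atTop_nhds_zero_of_lt_one (by norm_num) (by norm_num)

/-- An element whose norm is eventually dominated by a null sequence is zero. -/
lemma gcep_aux_eq_zero {y : A} {u : ℕ → ℝ} (hu : Tendsto u atTop (𝓝 0))
    (hle : ∀ᶠ n in atTop, ‖y‖ ≤ u n) : y = 0 := by
  have h0 : ‖y‖ ≤ 0 := ge_of_tendsto hu hle
  simpa using norm_le_zero_iff.mp h0

lemma gcep_rep {a ag : A} (ha : IsGCEP a ag) : ∀ n : ℕ, ag = a ^ n * ag ^ (n + 1) := by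
  intro n
  induction n with
  | zero => simp
  | succ n ih =>
    have h1 : ag ^ (n + 1) = a * ag ^ (n + 2) := by
      calc ag ^ (n + 1) = ag * ag ^ n := by rw [pow_succ']
        _ = (a * ag ^ 2) * ag ^ n := by rw [← ha.1]
        _ = a * (ag ^ 2 * ag ^ n) := by rw [mul_assoc]
        _ = a * ag ^ (n + 2) := by rw [← pow_add, add_comm]
    calc ag = a ^ n * ag ^ (n + 1) := ih
      _ = a ^ n * (a * ag ^ (n + 2)) := by rw [← h1]
      _ = (a ^ n * a) * ag ^ (n + 2) := by rw [mul_assoc]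
      _ = a ^ (n + 1) * ag ^ (n + 2) := by rw [pow_succ a n]

lemma gcep_rep2 {a ag : A} (ha : IsGCEP a ag) (n : ℕ) :
    a * ag = a ^ (n + 1) * ag ^ (n + 1) := by
  calc a * ag = a * (a ^ n * ag ^ (n + 1)) := by rw [← gcep_rep ha n]
    _ = (a * a ^ n) * ag ^ (n + 1) := by rw [mul_assoc]
    _ = a ^ (n + 1) * ag ^ (n + 1) := by rw [← pow_succ']

/-- key fact: `ag * (a * ag) = ag`. -/
lemma gcep_aAa {a ag : A} (ha : IsGCEP a ag) : ag * (a * ag) = ag := by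
  set q := fun n : ℕ => a ^ n - ag * a ^ (n + 1) with hq
  have hqt : Tendsto (fun n : ℕ => ‖q n‖ ^ ((1 : ℝ) / n)) atTop (𝓝 0) := ha.2.2
  have key : ∀ n : ℕ, ag * (a * ag) - ag = -(q n * ag ^ (n + 1)) := by
    intro n
    have e1 : ag * (a * ag) = (ag * a ^ (n + 1)) * ag ^ (n + 1) := by
      rw [gcep_rep2 ha n, mul_assoc]
    have e2 : ag * a ^ (n + 1) = a ^ n - q n := by
      simp only [hq]; noncomm_ring
    rw [e1, e2, sub_mul, ← gcep_rep ha n]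
    noncomm_ring
  apply sub_eq_zero.mp
  apply gcep_aux_eq_zero (u := fun n => (‖q n‖ * ‖ag‖ ^ n) * ‖ag‖)
  · simpa using (gcep_aux_tendsto hqt (norm_nonneg ag)).mul_const ‖ag‖
  · filter_upwards with n
    rw [key n, norm_neg]
    calc ‖q n * ag ^ (n + 1)‖ ≤ ‖q n‖ * ‖ag ^ (n + 1)‖ := norm_mul_le _ _
      _ ≤ ‖q n‖ * ‖ag‖ ^ (n + 1) :=
          mul_le_mul_of_nonneg_left (norm_pow_le' ag n.succ_pos) (norm_nonneg _)
      _ = (‖q n‖ * ‖ag‖ ^ n) * ‖ag‖ := by rw [pow_succ]; ring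

/-- key fact: if `c * ag = 0` then `c * (a * ag) = 0`. -/
lemma gcep_absorb {a ag : A} (ha : IsGCEP a ag) {c : A} (hc : c * ag = 0) :
    c * (a * ag) = 0 := by
  set q := fun n : ℕ => a ^ n - ag * a ^ (n + 1) with hq
  have hqt : Tendsto (fun n : ℕ => ‖q n‖ ^ ((1 : ℝ) / n)) atTop (𝓝 0) := ha.2.2
  have key : ∀ n : ℕ, c * (a * ag) = (c * q (n + 1)) * ag ^ (n + 1) := by
    intro n
    have e0 : a ^ (n + 1) = q (n + 1) + ag * a ^ (n + 2) := by
      simp only [hq]; noncomm_ring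
    calc c * (a * ag) = c * (a ^ (n + 1) * ag ^ (n + 1)) := by rw [← gcep_rep2 ha n]
      _ = (c * a ^ (n + 1)) * ag ^ (n + 1) := by rw [mul_assoc]
      _ = (c * (q (n + 1) + ag * a ^ (n + 2))) * ag ^ (n + 1) := by rw [← e0]
      _ = (c * q (n + 1) + (c * ag) * a ^ (n + 2)) * ag ^ (n + 1) := by
          rw [mul_add, mul_assoc]
      _ = (c * q (n + 1)) * ag ^ (n + 1) := by rw [hc]; noncomm_ring
  apply gcep_aux_eq_zero (u := fun n => ‖c‖ * (‖q (n + 1)‖ * ‖ag‖ ^ (n + 1)))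
  · have hshift : Tendsto (fun n : ℕ => ‖q (n + 1)‖ * ‖ag‖ ^ (n + 1)) atTop (𝓝 0) :=
      (gcep_aux_tendsto hqt (norm_nonneg ag)).comp (tendsto_add_atTop_nat 1)
    simpa using hshift.const_mul ‖c‖
  · filter_upwards with n
    rw [key n]
    calc ‖(c * q (n + 1)) * ag ^ (n + 1)‖ ≤ ‖c * q (n + 1)‖ * ‖ag ^ (n + 1)‖ :=
          norm_mul_le _ _
      _ ≤ (‖c‖ * ‖q (n + 1)‖) * ‖ag ^ (n + 1)‖ :=
          mul_le_mul_of_nonneg_right (norm_mul_le _ _) (norm_nonneg _)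
      _ ≤ (‖c‖ * ‖q (n + 1)‖) * ‖ag‖ ^ (n + 1) :=
          mul_le_mul_of_nonneg_left (norm_pow_le' ag (Nat.succ_pos n)) (by positivity)
      _ = ‖c‖ * (‖q (n + 1)‖ * ‖ag‖ ^ (n + 1)) := by ring

theorem stmt11 (a b ag bg : A) (ha : IsGCEP a ag) (hb : IsGCEP b bg) :
    (a * ag = b * ag ∧ ag * a = ag * b) ↔
      ((1 - a * ag) * b * (a * ag) = 0 ∧
        (a * ag) * b * (a * ag) = (a * ag) * a * (a * ag) ∧
        (a * ag) * b * (1 - a * ag) = (a * ag) * a * (1 - a * ag)) := by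
  have hAA : ag * (a * ag) = ag := gcep_aAa ha
  have hag1 : (a * ag) * ag = ag := by
    rw [mul_assoc, ← pow_two, ← ha.1]
  constructor
  · rintro ⟨h1, h2⟩
    have hpb : (a * ag) * b = (a * ag) * a := by
      rw [mul_assoc, ← h2, ← mul_assoc]
    refine ⟨?_, by rw [hpb], by rw [hpb]⟩
    have hpp : (a * ag) * (a * ag) = a * ag := by
      rw [mul_assoc a ag (a * ag), hAA]
    have hc : ((1 - a * ag) * b) * ag = 0 := by
      rw [mul_assoc, ← h1, sub_mul, one_mul, hpp, sub_self]
    exact gcep_absorb ha hc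
  · rintro ⟨g1, g2, g3⟩
    have hpb : (a * ag) * b = (a * ag) * a := by
      calc (a * ag) * b
          = (a * ag) * b * (a * ag) + (a * ag) * b * (1 - a * ag) := by noncomm_ring
        _ = (a * ag) * a * (a * ag) + (a * ag) * a * (1 - a * ag) := by rw [g2, g3]
        _ = (a * ag) * a := by noncomm_ring
    have hbp : b * (a * ag) = (a * ag) * a * (a * ag) := by
      calc b * (a * ag)
          = (1 - a * ag) * b * (a * ag) + (a * ag) * b * (a * ag) := by noncomm_ring
        _ = (a * ag) * a * (a * ag) := by rw [g1, g2, zero_add]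
    constructor
    · have hba : b * ag = a * ag := by
        calc b * ag = b * ((a * ag) * ag) := by rw [hag1]
          _ = (b * (a * ag)) * ag := by simp only [mul_assoc]
          _ = ((a * ag) * a * (a * ag)) * ag := by rw [hbp]
          _ = ((a * ag) * a) * ((a * ag) * ag) := by simp only [mul_assoc]
          _ = ((a * ag) * a) * ag := by rw [hag1]
          _ = a * (ag * (a * ag)) := by simp only [mul_assoc]
          _ = a * ag := by rw [hAA]
      exact hba.symm
    · calc ag * a = (ag * (a * ag)) * a := by rw [hAA]
        _ = ag * ((a * ag) * b) := by rw [mul_assoc ag (a * ag) a, ← hpb]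
        _ = (ag * (a * ag)) * b := by rw [← mul_assoc ag (a * ag) b]
        _ = ag * b := by rw [hAA]
end

section
/- Let A be a complex Banach *-algebra with identity and a ∈ A generalized Drazin invertible. Suppose x ∈ A satisfies x a x = x, (ax)* = ax, (xa - 1) a^d = 0, and x ∈ a^d A (i.e., x = a^d z for some z ∈ A). Then x A = a^d A and x* A = a^d A. -/
open Filter Topology

variable {A : Type*} [NormedRing A] [StarRing A] [NormedAlgebra ℂ A] [StarModule ℂ A]
  [CompleteSpace A]

/-!
Membership `w ∈ y A` is divisibility `y ∣ w`, so two principal right ideals coincide as soon as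
their generators divide each other. From `(x a - 1) a^d = 0` we get `a^d = x (a a^d)`, and with
`a a^d² = a^d` also `a x a^d = a^d`; since `a x` is self-adjoint this reads `a^d = x* (a* a^d)`.
Conversely `x* = (x a x)* = (a x) x*` and `a x = a a^d z = a^d a z`, so `a^d` divides `x*`.
-/

section Monoid

variable {M : Type*} [Monoid M]

theorem dvd_iff_dvd_of_dvd_of_dvd {x y : M} (hxy : x ∣ y) (hyx : y ∣ x) (w : M) :
    x ∣ w ↔ y ∣ w :=
  ⟨hyx.trans, hxy.trans⟩

theorem mul_mul_eq_self_of_mul_sq_eq {a x y : M} (hsq : a * y ^ 2 = y) (hxa : x * a * y = y) :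
    a * x * y = y :=
  calc a * x * y = a * x * (a * y * y) := by rw [mul_assoc a y y, ← sq, hsq]
    _ = a * (x * a * y) * y := by simp only [mul_assoc]
    _ = y := by rw [hxa, mul_assoc, ← sq, hsq]

theorem dvd_mul_left_of_commute {a y x : M} (hcomm : a * y = y * a) (hyx : y ∣ x) :
    y ∣ a * x := by
  obtain ⟨z, rfl⟩ := hyx
  exact ⟨a * z, by rw [← mul_assoc, hcomm, mul_assoc]⟩

end Monoid

section StarMonoid

variable {M : Type*} [Monoid M] [StarMul M] {a x : M}

theorem star_eq_mul_mul_star (hxax : x * a * x = x) (hax : star (a * x) = a * x) :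
    star x = a * x * star x := by
  conv_lhs => rw [← hxax]
  rw [star_mul, star_mul, ← mul_assoc, ← star_mul, hax]

theorem star_dvd_of_mul_mul_eq_self {y : M} (hax : star (a * x) = a * x) (hy : a * x * y = y) :
    star x ∣ y :=
  ⟨star a * y, by rw [← mul_assoc, ← star_mul, hax, hy]⟩

end StarMonoid

theorem stmt14 (a ad x : A) (had : IsGD a ad)
    (h1 : x * a * x = x) (h2 : star (a * x) = a * x)
    (h3 : (x * a - 1) * ad = 0) (h4 : ∃ z : A, x = ad * z) :
    (∀ w : A, (∃ u, w = x * u) ↔ (∃ u, w = ad * u)) ∧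
      (∀ w : A, (∃ u, w = star x * u) ↔ (∃ u, w = ad * u)) := by
  obtain ⟨hsq, hcomm, -⟩ := had
  have hxa : x * a * ad = ad := by rwa [sub_mul, one_mul, sub_eq_zero] at h3
  have hx_dvd : x ∣ ad := ⟨a * ad, by rw [← mul_assoc, hxa]⟩
  have hstar_dvd : star x ∣ ad :=
    star_dvd_of_mul_mul_eq_self h2 (mul_mul_eq_self_of_mul_sq_eq hsq hxa)
  have hdvd_star : ad ∣ star x := by
    rw [star_eq_mul_mul_star h1 h2]
    exact (dvd_mul_left_of_commute hcomm h4).mul_right _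
  exact ⟨dvd_iff_dvd_of_dvd_of_dvd hx_dvd h4, dvd_iff_dvd_of_dvd_of_dvd hstar_dvd hdvd_star⟩
end

section
/- Let A be a complex Banach *-algebra with identity and a, b ∈ A with generalized core-EP inverses such that a ≤^⊕ b. Then there exist projections e₁ = a a^⊕ and e₂ with e₁ e₂ = e₂ e₁ = 0 such that, writing e₃ = 1 - e₁ - e₂: e₁ a e_j = e₁ b e_j for j = 1,2,3; e₂ b e₁ = e₃ b e₁ = e₃ b e₂ = 0; e₁ b e₁ is invertible in e₁ A e₁; e₂ b e₂ is invertible in e₂ A e₂; and both (1-e₁) a (1-e₁) and e₃ b e₃ are quasinilpotent. -/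
/-!
Write `e = a a^⊕` and `f = b b^⊕`. If `v = u v²` and `‖uⁿ - x u^{n+1}‖^{1/n} → 0`, then
`x u v = v` and `x u (u v) = u v`: both differences have the form `(uⁿ - x u^{n+1}) vⁿ c`,
a superexponentially small factor times a geometric one. Applied to `(a, a^⊕, a^⊕)`,
`(b, b^⊕, b^⊕)` and, since `b a^⊕ = a a^⊕`, to `(b, b^⊕, a^⊕)`, this shows that `e ≤ f` are
projections whose ranges are `b`-invariant, so `b` is block upper triangular for
`1 = e + (f - e) + (1 - f)`. The corners `e b e = e a e` and `f b f` are inverted by `a^⊕` and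
`b^⊕`, so the middle block `(f - e) b (f - e)` is invertible in its corner as well. Finally
`((1 - e) a (1 - e))^{n+1} = a (aⁿ - a^⊕ a^{n+1})` gives the quasinilpotence of
`(1 - e) a (1 - e)`, and likewise of `(1 - f) b (1 - f)`.
-/

open Filter Topology

variable {A : Type*} [NormedRing A] [StarRing A] [NormedAlgebra ℂ A] [StarModule ℂ A]
  [CompleteSpace A]

-- `IsQNil z` is `RootDecay (z ^ ·)`, and the limit in `IsGCEP a x` is
-- `RootDecay fun n => a ^ n - x * a ^ (n + 1)`.
def RootDecay {E : Type*} [SeminormedAddGroup E] (r : ℕ → E) : Prop :=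
  Tendsto (fun n : ℕ => ‖r n‖ ^ ((1 : ℝ) / n)) atTop (𝓝 0)

section RootDecay

variable {E F R : Type*} [SeminormedAddGroup E] [SeminormedAddGroup F]

theorem rootDecay_iff {r : ℕ → E} :
    RootDecay r ↔ ∀ ε > 0, ∀ᶠ n : ℕ in atTop, ‖r n‖ ≤ ε ^ n := by
  constructor
  · intro hr ε hε
    filter_upwards [hr.eventually (gt_mem_nhds hε), eventually_ge_atTop 1] with n hlt hn
    have hnonneg : 0 ≤ ‖r n‖ ^ ((1 : ℝ) / n) := by positivity
    calc ‖r n‖ = (‖r n‖ ^ ((1 : ℝ) / n)) ^ n := by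
          rw [← Real.rpow_natCast, ← Real.rpow_mul (norm_nonneg _), one_div_mul_cancel
            (by positivity), Real.rpow_one]
      _ ≤ ε ^ n := pow_le_pow_left₀ hnonneg hlt.le n
  · intro h
    refine tendsto_order.2 ⟨fun l hl => Eventually.of_forall fun n => hl.trans_le
      (by positivity), fun u hu => ?_⟩
    filter_upwards [h (u / 2) (by positivity), eventually_ge_atTop 1] with n hle hn
    calc ‖r n‖ ^ ((1 : ℝ) / n) ≤ ((u / 2) ^ n) ^ ((1 : ℝ) / n) :=
          Real.rpow_le_rpow (norm_nonneg _) hle (by positivity)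
      _ = u / 2 := by
        rw [← Real.rpow_natCast, ← Real.rpow_mul (by positivity), mul_one_div_cancel
          (by positivity), Real.rpow_one]
      _ < u := half_lt_self hu

theorem RootDecay.of_norm_succ_le {r : ℕ → E} {s : ℕ → F} (hr : RootDecay r) (C : ℝ)
    (hs : ∀ n, ‖s (n + 1)‖ ≤ C * ‖r n‖) : RootDecay s := by
  rw [rootDecay_iff] at hr ⊢
  intro ε hε
  have hC : ∀ᶠ n : ℕ in atTop, |C| ≤ ε * 2 ^ n :=
    ((tendsto_pow_atTop_atTop_of_one_lt one_lt_two).const_mul_atTop hε).eventually_ge_atTop _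
  obtain ⟨N, hN⟩ := eventually_atTop.1 (hC.and (hr (ε / 2) (by positivity)))
  refine eventually_atTop.2 ⟨N + 1, fun n hn => ?_⟩
  obtain ⟨m, rfl⟩ : ∃ m, n = m + 1 := ⟨n - 1, by omega⟩
  obtain ⟨hCm, hrm⟩ := hN m (by omega)
  calc ‖s (m + 1)‖ ≤ |C| * ‖r m‖ := (hs m).trans (by gcongr; exact le_abs_self C)
    _ ≤ (ε * 2 ^ m) * (ε / 2) ^ m := by gcongr
    _ = ε ^ (m + 1) := by rw [mul_assoc, ← mul_pow]; ring

theorem RootDecay.tendsto_mul_pow [NormedRing R] {r : ℕ → R} (hr : RootDecay r) (y : R) :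
    Tendsto (fun n => r n * y ^ n) atTop (𝓝 0) := by
  set ε := 1 / (2 * (‖y‖ + 1))
  have hεy : ε * ‖y‖ ≤ 1 / 2 := by
    rw [div_mul_eq_mul_div, one_mul, div_le_div_iff₀ (by positivity) two_pos]
    linarith
  refine squeeze_zero_norm' ?_ (tendsto_pow_atTop_nhds_zero_of_lt_one (r := (1 / 2 : ℝ))
    (by norm_num) (by norm_num))
  filter_upwards [rootDecay_iff.1 hr ε (by positivity), eventually_ge_atTop 1] with n hrn hn
  calc ‖r n * y ^ n‖ ≤ ‖r n‖ * ‖y‖ ^ n :=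
        (norm_mul_le _ _).trans (by gcongr; exact norm_pow_le' y hn)
    _ ≤ ε ^ n * ‖y‖ ^ n := by gcongr
    _ = (ε * ‖y‖) ^ n := (mul_pow _ _ _).symm
    _ ≤ (1 / 2) ^ n := by gcongr

end RootDecay

theorem pow_mul_pow_succ_of_eq_mul_sq {M : Type*} [Monoid M] {u v : M} (hv : v = u * v ^ 2)
    (n : ℕ) : u ^ n * v ^ (n + 1) = v := by
  induction n with
  | zero => simp
  | succ n ih =>
    calc u ^ (n + 1) * v ^ (n + 1 + 1) = u ^ n * ((u * v ^ 2) * v ^ n) := by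
          rw [pow_succ u n, show n + 1 + 1 = 2 + n by ring, pow_add]; simp only [mul_assoc]
      _ = v := by rw [← hv, ← pow_succ', ih]

section RootDecayOfPowSub

variable {R : Type*} [NormedRing R] {u x : R}

theorem mul_mul_eq_of_eventually_eq_pow_mul_pow
    (hr : RootDecay fun n => u ^ n - x * u ^ (n + 1)) {w y z : R}
    (hw : ∀ᶠ n : ℕ in atTop, w = u ^ n * y ^ n * z) : x * (u * w) = w := by
  have hlim : Tendsto (fun n => (u ^ n - x * u ^ (n + 1)) * y ^ n * z) atTop (𝓝 0) := by
    simpa using (hr.tendsto_mul_pow y).mul_const z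
  have hconst : ∀ᶠ n : ℕ in atTop, (u ^ n - x * u ^ (n + 1)) * y ^ n * z = w - x * (u * w) :=
    hw.mono fun n hn => by rw [hn]; simp only [sub_mul, pow_succ', mul_assoc]
  exact (sub_eq_zero.1 (tendsto_nhds_unique tendsto_const_nhds (hlim.congr' hconst))).symm

variable {v : R}

theorem mul_mul_eq_of_eq_mul_sq (hr : RootDecay fun n => u ^ n - x * u ^ (n + 1))
    (hv : v = u * v ^ 2) : x * (u * v) = v :=
  mul_mul_eq_of_eventually_eq_pow_mul_pow (y := v) (z := v) hr <| Eventually.of_forall fun n => by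
    rw [mul_assoc, ← pow_succ, pow_mul_pow_succ_of_eq_mul_sq hv]

theorem mul_mul_mul_eq_of_eq_mul_sq (hr : RootDecay fun n => u ^ n - x * u ^ (n + 1))
    (hv : v = u * v ^ 2) : x * (u * (u * v)) = u * v :=
  mul_mul_eq_of_eventually_eq_pow_mul_pow (y := v) (z := 1) hr <|
    (eventually_ge_atTop 1).mono fun n hn => by
      obtain ⟨m, rfl⟩ : ∃ m, n = m + 1 := ⟨n - 1, by omega⟩
      rw [mul_one, pow_succ', mul_assoc, pow_mul_pow_succ_of_eq_mul_sq hv]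

theorem rootDecay_pow_one_sub_mul_mul_one_sub (hr : RootDecay fun n => u ^ n - x * u ^ (n + 1))
    (hx : x * (u * (u * x)) = u * x) :
    RootDecay fun n => ((1 - u * x) * u * (1 - u * x)) ^ n := by
  have hcompress : (1 - u * x) * u * (1 - u * x) = (1 - u * x) * u := by
    have : (1 - u * x) * u * (u * x) = 0 := by
      rw [sub_mul, sub_mul, one_mul, mul_assoc (u * x), mul_assoc u x, hx, sub_self]
    rw [mul_sub, mul_one, this, sub_zero]
  have hpow : ∀ n, ((1 - u * x) * u) ^ (n + 1) = (1 - u * x) * u ^ (n + 1) := by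
    intro n
    induction n with
    | zero => simp
    | succ n ih => rw [pow_succ', ih, ← mul_assoc, hcompress, mul_assoc, ← pow_succ']
  refine hr.of_norm_succ_le ‖u‖ fun n => ?_
  have : ((1 - u * x) * u) ^ (n + 1) = u * (u ^ n - x * u ^ (n + 1)) := by
    rw [hpow, sub_mul, one_mul, mul_sub, mul_assoc, ← pow_succ']
  rw [hcompress, this]
  exact norm_mul_le _ _

end RootDecayOfPowSub

def IsCornerInverse {R : Type*} [Mul R] (p y w : R) : Prop :=
  p * w * p = w ∧ y * w = p ∧ w * y = p

theorem IsCornerInverse.sub_of_triangular {R : Type*} [Ring R] {p q b v w : R}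
    (hp : IsIdempotentElem p) (hq : IsIdempotentElem q) (hpq : p * q = p) (hqp : q * p = p)
    (hbp : (q - p) * b * p = 0) (hv : IsCornerInverse p (p * b * p) v)
    (hw : IsCornerInverse q (q * b * q) w) :
    IsCornerInverse (q - p) ((q - p) * b * (q - p)) ((q - p) * w * (q - p)) := by
  obtain ⟨hpvp, hpbv, -⟩ := hv
  obtain ⟨hqwq, hqbw, hwqb⟩ := hw
  set r := q - p
  have hr : IsIdempotentElem r := hp.sub hq hpq hqp
  have hrq : r * q = r := by simp only [r, sub_mul, hq.eq, hpq]
  have hqr : q * r = r := by simp only [r, mul_sub, hq.eq, hqp]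
  have hrp : r * p = 0 := by simp only [r, sub_mul, hqp, hp.eq, sub_self]
  have hwq : w * q = w := by rw [← hqwq, mul_assoc, hq.eq]
  have hpv : p * v = v := by rw [← hpvp, ← mul_assoc, ← mul_assoc, hp.eq]
  have hqbp : q * b * p = p * b * p := by
    rwa [sub_mul, sub_mul, sub_eq_zero] at hbp
  have hrbr : r * b * r = r * b * q := by
    rw [show q = p + r by simp only [r, add_sub_cancel], mul_add, hbp, zero_add]
  -- the lower-left block `r b p` vanishes, so `w p` is the inverse `v` of the corner `p b p`
  have hwp : w * p = v :=
    calc w * p = w * (q * b * q) * p * v := by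
          rw [mul_assoc w (q * b * q) p, mul_assoc (q * b) q p, hqp, hqbp, mul_assoc w, hpbv]
      _ = v := by rw [hwqb, hqp, hpv]
  have hrwr : r * w * r = r * w :=
    calc r * w * r = r * w * q - r * w * p := by rw [← mul_sub]
      _ = r * w := by
        rw [mul_assoc r w q, hwq, mul_assoc r w p, hwp, ← hpv, ← mul_assoc, hrp, zero_mul,
          sub_zero]
  refine ⟨by rw [hrwr, ← mul_assoc, hr.eq, hrwr], ?_, ?_⟩
  · calc r * b * r * (r * w * r) = r * b * q * w := by
          rw [hrwr, ← mul_assoc, mul_assoc (r * b) r r, hr.eq, hrbr]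
      _ = r * q * b * q * w := by rw [hrq]
      _ = r * (q * b * q * w) := by simp only [mul_assoc]
      _ = r := by rw [hqbw, hrq]
  · calc r * w * r * (r * b * r) = r * w * b * r := by
          rw [hrwr, ← mul_assoc, ← mul_assoc, hrwr]
      _ = r * (w * q) * b * (q * r) := by rw [hwq, hqr]
      _ = r * (w * (q * b * q)) * r := by simp only [mul_assoc]
      _ = r := by rw [hwqb, hrq, hr.eq]

theorem mul_mul_eq_mul_of_eq_mul {M : Type*} [Semigroup M] {p u y t : M} (hp : p = u * y)
    (h : y * (u * t) = t) : p * u * t = u * t := by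
  rw [hp, mul_assoc, mul_assoc, h]

namespace IsGCEP

variable {R : Type*} [NormedRing R] [StarRing R] {a x : R}

theorem rootDecay (ha : IsGCEP a x) : RootDecay fun n => a ^ n - x * a ^ (n + 1) := ha.2.2

theorem mul_mul_self (ha : IsGCEP a x) : x * (a * x) = x :=
  mul_mul_eq_of_eq_mul_sq ha.rootDecay ha.1

theorem mul_mul_mul_self (ha : IsGCEP a x) : x * (a * (a * x)) = a * x :=
  mul_mul_mul_eq_of_eq_mul_sq ha.rootDecay ha.1

theorem isStarProjection (ha : IsGCEP a x) : IsStarProjection (a * x) :=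
  ⟨by rw [IsIdempotentElem, mul_assoc, ha.mul_mul_self], ha.2.1⟩

theorem isCornerInverse (ha : IsGCEP a x) : IsCornerInverse (a * x) (a * x * a * (a * x)) x := by
  have hex : a * x * x = x := by rw [mul_assoc, ← sq, ← ha.1]
  refine ⟨by rw [hex, ha.mul_mul_self], ?_, ?_⟩
  · rw [mul_assoc _ (a * x) x, hex, mul_assoc (a * x) a x, mul_assoc a x, ha.mul_mul_self]
  · rw [mul_assoc (a * x) a, ← mul_assoc, ha.mul_mul_self, ha.mul_mul_mul_self]

theorem isQNil (ha : IsGCEP a x) : IsQNil ((1 - a * x) * a * (1 - a * x)) :=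
  rootDecay_pow_one_sub_mul_mul_one_sub ha.rootDecay ha.mul_mul_mul_self

end IsGCEP

theorem stmt17 (a b ag bg : A) (ha : IsGCEP a ag) (hb : IsGCEP b bg)
    (h1 : a * ag = b * ag) (h2 : ag * a = ag * b) :
    ∃ e2 : A, e2 * e2 = e2 ∧ star e2 = e2 ∧
      (a * ag) * e2 = 0 ∧ e2 * (a * ag) = 0 ∧
      (let e1 : A := a * ag; let e3 : A := 1 - e1 - e2;
        e1 * a * e1 = e1 * b * e1 ∧ e1 * a * e2 = e1 * b * e2 ∧
        e1 * a * e3 = e1 * b * e3 ∧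
        e2 * b * e1 = 0 ∧ e3 * b * e1 = 0 ∧ e3 * b * e2 = 0 ∧
        (∃ w : A, e1 * w * e1 = w ∧ (e1 * b * e1) * w = e1 ∧ w * (e1 * b * e1) = e1) ∧
        (∃ w : A, e2 * w * e2 = w ∧ (e2 * b * e2) * w = e2 ∧ w * (e2 * b * e2) = e2) ∧
        IsQNil ((1 - e1) * a * (1 - e1)) ∧ IsQNil (e3 * b * e3)) := by
  have hag : ag = b * ag ^ 2 := by rw [sq, ← mul_assoc, ← h1, mul_assoc, ← sq, ← ha.1]
  have hbe : bg * (b * (a * ag)) = a * ag := by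
    rw [h1]; exact mul_mul_mul_eq_of_eq_mul_sq hb.rootDecay hag
  have hae : ag * (b * (a * ag)) = a * ag := by
    rw [← mul_assoc, ← h2, mul_assoc, ha.mul_mul_mul_self]
  have heb : a * ag * b = a * ag * a := by rw [mul_assoc, ← h2, mul_assoc]
  set e := a * ag
  set f := b * bg
  have he : IsStarProjection e := ha.isStarProjection
  have hf : IsStarProjection f := hb.isStarProjection
  have hfe : f * e = e := by
    rw [show f = b * bg from rfl, mul_assoc, h1, mul_mul_eq_of_eq_mul_sq hb.rootDecay hag]
  have hef : e * f = e := by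
    simpa only [star_mul, he.isSelfAdjoint.star_eq, hf.isSelfAdjoint.star_eq] using congr(star $hfe)
  have hfbe : f * b * e = b * e := mul_mul_eq_mul_of_eq_mul rfl hbe
  have hfbf : f * b * f = b * f := mul_mul_eq_mul_of_eq_mul rfl hb.mul_mul_mul_self
  have htri : (f - e) * b * e = 0 := by
    rw [sub_mul, sub_mul, hfbe, mul_mul_eq_mul_of_eq_mul h1 hae, sub_self]
  have hcorner : IsCornerInverse e (e * b * e) ag := by rw [heb]; exact ha.isCornerInverse
  have he2 : IsStarProjection (f - e) := he.sub_of_mul_eq_right hf hfe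
  refine ⟨f - e, he2.isIdempotentElem, he2.isSelfAdjoint,
    by rw [mul_sub, hef, he.isIdempotentElem.eq, sub_self],
    by rw [sub_mul, hfe, he.isIdempotentElem.eq, sub_self], ?_⟩
  dsimp only
  rw [show 1 - e - (f - e) = 1 - f by abel]
  refine ⟨by rw [heb], by rw [heb], by rw [heb], htri, ?_, ?_, ⟨ag, hcorner⟩,
    ⟨_, hcorner.sub_of_triangular he.isIdempotentElem hf.isIdempotentElem hef hfe htri
      hb.isCornerInverse⟩, ha.isQNil, hb.isQNil⟩
  · rw [sub_mul, sub_mul, one_mul, hfbe, sub_self]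
  · simp only [mul_sub, sub_mul, one_mul, hfbf, hfbe, sub_self]
end

section
/- Let A be a complex Banach *-algebra with identity and a ∈ A. Suppose a = x + y where x is core invertible, y is quasinilpotent, x* y = 0, and y x = 0. Then a has a generalized core-EP inverse, namely x^#: i.e., x^# = a (x^#)², (a x^#)* = a x^#, and lim_{n→∞} ‖aⁿ - x^# a^{n+1}‖^{1/n} = 0. -/
open Filter Topology

variable {A : Type*} [NormedRing A] [StarRing A] [NormedAlgebra ℂ A] [StarModule ℂ A]
  [CompleteSpace A]

/-! Since `c ∈ xA` and `yx = 0`, we get `yc = 0`, so `ac = xc` and `ac² = xc² = c`. Put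
`p = 1 - ca`; then `px = x - cx² = 0` and `yx = 0` force `paⁿ = pyⁿ`, i.e.
`aⁿ - ca^{n+1} = pyⁿ`, and the `n`-th roots of `‖pyⁿ‖` tend to `0` because `y` is
quasinilpotent. -/

lemma tendsto_norm_mul_rpow_one_div_of_tendsto {R : Type*} [NonUnitalSeminormedRing R]
    {u : ℕ → R} (hu : Tendsto (fun n : ℕ => ‖u n‖ ^ ((1 : ℝ) / n)) atTop (𝓝 0)) (b : R) :
    Tendsto (fun n : ℕ => ‖b * u n‖ ^ ((1 : ℝ) / n)) atTop (𝓝 0) := by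
  have hb : (0 : ℝ) < ‖b‖ + 1 := by positivity
  have hroot : Tendsto (fun n : ℕ => (‖b‖ + 1) ^ ((1 : ℝ) / n)) atTop (𝓝 1) := by
    simpa [Function.comp_def] using
      (Real.continuousAt_const_rpow (b := 0) hb.ne').tendsto.comp
        tendsto_one_div_atTop_nhds_zero_nat
  have hupper : Tendsto (fun n : ℕ => (‖b‖ + 1) ^ ((1 : ℝ) / n) * ‖u n‖ ^ ((1 : ℝ) / n))
      atTop (𝓝 0) := by
    simpa using hroot.mul hu
  refine squeeze_zero (fun n => by positivity) (fun n => ?_) hupper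
  rw [← Real.mul_rpow hb.le (norm_nonneg _)]
  gcongr
  calc ‖b * u n‖ ≤ ‖b‖ * ‖u n‖ := norm_mul_le _ _
    _ ≤ (‖b‖ + 1) * ‖u n‖ := by gcongr; linarith

lemma mul_add_pow_of_mul_eq_zero {R : Type*} [Semiring R] {p x y : R}
    (hpx : p * x = 0) (hyx : y * x = 0) (n : ℕ) : p * (x + y) ^ n = p * y ^ n := by
  induction n with
  | zero => simp
  | succ n ih =>
    have hyn : p * y ^ n * x = 0 := by
      cases n with
      | zero => simpa using hpx
      | succ m => rw [pow_succ, mul_assoc, mul_assoc, hyx, mul_zero, mul_zero]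
    rw [pow_succ, ← mul_assoc, ih, mul_add, hyn, zero_add, mul_assoc, ← pow_succ]

theorem stmt19_general (a x y c : A) (ha : a = x + y)
    (h3 : star (x * c) = x * c)
    (h4 : c * x ^ 2 = x) (h5 : x * c ^ 2 = c) (h6 : ∃ z, c = x * z)
    (hy : IsQNil y) (ho2 : y * x = 0) :
    IsGCEP a c := by
  obtain ⟨z, hz⟩ := h6
  have hyc : y * c = 0 := by rw [hz, ← mul_assoc, ho2, zero_mul]
  have hac : a * c = x * c := by rw [ha, add_mul, hyc, add_zero]
  have hcax : (1 - c * a) * x = 0 := by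
    rw [sub_mul, one_mul, mul_assoc, ha, add_mul, ho2, add_zero, ← sq, h4, sub_self]
  refine ⟨?_, by rw [hac, h3], ?_⟩
  · rw [sq, ← mul_assoc, hac, mul_assoc, ← sq, h5]
  · refine (tendsto_norm_mul_rpow_one_div_of_tendsto hy (1 - c * a)).congr fun n => ?_
    have hpow := mul_add_pow_of_mul_eq_zero hcax ho2 n
    rw [← ha] at hpow
    rw [← hpow, sub_mul, one_mul, mul_assoc, ← pow_succ']

theorem stmt19 (a x y c : A) (ha : a = x + y)
    (h1 : c * x * c = c) (h2 : x * c * x = x) (h3 : star (x * c) = x * c)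
    (h4 : c * x ^ 2 = x) (h5 : x * c ^ 2 = c) (h6 : ∃ z, c = x * z)
    (hy : IsQNil y) (ho1 : star x * y = 0) (ho2 : y * x = 0) :
    IsGCEP a c :=
  stmt19_general a x y c ha h3 h4 h5 h6 hy ho2
end
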